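/- arXiv:2311.16418 — 4 statements merged into one kernel-verified Lean document; each statement's English description precedes it below -/
import Mathlib

section
/- Let C ↔ f : [a,b] → ℝ^M (a < b) be a continuous and rectifiable curve and let s(x) = ℓ of f restricted to [a,x] be its arc length function. Then for Lebesgue-almost every x ∈ [a,b], both s′(x) and f′(x) exist and s′(x) = ‖f′(x)‖. -/
open scoped BigOperators ENNReal
open MeasureTheory Filter

noncomputable section

/-- A partition `a = x 0 < x 1 < ⋯ < x n = b` of the interval `[a,b]`. -/
structure IntervalPartition (a b : ℝ) where
  n : ℕ
  x : Fin (n + 1) → ℝ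
  mono : StrictMono x
  first : x 0 = a
  last : x (Fin.last n) = b

/-- The mesh `‖P‖ = maxᵢ (xᵢ − xᵢ₋₁)` of a partition. -/
def IntervalPartition.mesh {a b : ℝ} (P : IntervalPartition a b) : ℝ :=
  ⨆ i : Fin P.n, (P.x i.succ - P.x i.castSucc)

/-- The inscribed sum `V(f;P) = Σᵢ ‖f(xᵢ) − f(xᵢ₋₁)‖`. -/
def inscribedSum {M : ℕ} (f : ℝ → EuclideanSpace ℝ (Fin M)) {a b : ℝ}
    (P : IntervalPartition a b) : ℝ :=
  ∑ i : Fin P.n, ‖f (P.x i.succ) - f (P.x i.castSucc)‖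

/-- The length `ℓ(C)` of the curve `C ↔ f : [a,b] → ℝ^M`: the supremum of the inscribed sums
over all partitions of `[a,b]`, a value in `[0,+∞]`. -/
def curveLength {M : ℕ} (f : ℝ → EuclideanSpace ℝ (Fin M)) (a b : ℝ) : ℝ≥0∞ :=
  ⨆ P : IntervalPartition a b, ENNReal.ofReal (inscribedSum f P)

/-- The total variation `T_h[a,b]` of a real function `h` on `[a,b]`. -/
def totalVariation (h : ℝ → ℝ) (a b : ℝ) : ℝ≥0∞ :=
  ⨆ P : IntervalPartition a b, ENNReal.ofReal (∑ i : Fin P.n, |h (P.x i.succ) - h (P.x i.castSucc)|)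

/-- The positive variation `T_h⁺[a,b]` of a real function `h` on `[a,b]`. -/
def posVariation (h : ℝ → ℝ) (a b : ℝ) : ℝ≥0∞ :=
  ⨆ P : IntervalPartition a b,
    ENNReal.ofReal (∑ i : Fin P.n, max (h (P.x i.succ) - h (P.x i.castSucc)) 0)

/-- The negative variation `T_h⁻[a,b]` of a real function `h` on `[a,b]`. -/
def negVariation (h : ℝ → ℝ) (a b : ℝ) : ℝ≥0∞ :=
  ⨆ P : IntervalPartition a b,
    ENNReal.ofReal (∑ i : Fin P.n, max (h (P.x i.castSucc) - h (P.x i.succ)) 0)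

/-- `h` is absolutely continuous on `[a,b]`: for every `ε > 0` there is `δ > 0` such that
`Σᵢ |h(vᵢ) − h(uᵢ)| < ε` for every finite family of pairwise non-overlapping subintervals
`[uᵢ,vᵢ]` of `[a,b]` of total length `< δ`. -/
def AbsContOn (h : ℝ → ℝ) (a b : ℝ) : Prop :=
  ∀ ε > (0 : ℝ), ∃ δ > (0 : ℝ), ∀ n : ℕ, ∀ u v : Fin n → ℝ,
    (∀ i, a ≤ u i ∧ u i ≤ v i ∧ v i ≤ b) →
    (∀ i j, i ≠ j → Set.Ioo (u i) (v i) ∩ Set.Ioo (u j) (v j) = ∅) →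
    (∑ i, (v i - u i)) < δ → (∑ i, |h (v i) - h (u i)|) < ε

/-- `φ` is an increasing homeomorphism of `[a,b]` onto `[c,d]` sending `a` to `c` and `b` to `d`. -/
def IsIncrHomeo (φ : ℝ → ℝ) (a b c d : ℝ) : Prop :=
  ContinuousOn φ (Set.Icc a b) ∧ StrictMonoOn φ (Set.Icc a b) ∧ φ a = c ∧ φ b = d

/-- `f : [a,b] → ℝ^M` and `g : [c,d] → ℝ^M` are Fréchet equivalent. -/
def FrechetEquiv {M : ℕ} (f : ℝ → EuclideanSpace ℝ (Fin M)) (a b : ℝ)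
    (g : ℝ → EuclideanSpace ℝ (Fin M)) (c d : ℝ) : Prop :=
  ∀ ε > (0 : ℝ), ∃ φ : ℝ → ℝ, IsIncrHomeo φ a b c d ∧
    ∀ x ∈ Set.Icc a b, ‖f x - g (φ x)‖ < ε

/-- The Fréchet distance between the curves `C ↔ f : [a,b] → ℝ^M` and `D ↔ g : [c,d] → ℝ^M`. -/
def frechetDist {M : ℕ} (f : ℝ → EuclideanSpace ℝ (Fin M)) (a b : ℝ)
    (g : ℝ → EuclideanSpace ℝ (Fin M)) (c d : ℝ) : ℝ :=
  ⨅ φ : {φ : ℝ → ℝ // IsIncrHomeo φ a b c d}, ⨆ x ∈ Set.Icc a b, ‖f x - g (φ.1 x)‖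

/-- A parametric integrand: a continuous `F : ℝ^M × ℝ^M → ℝ` positively homogeneous of
degree 1 in the second variable. -/
def IsParametricIntegrand {M : ℕ}
    (F : EuclideanSpace ℝ (Fin M) → EuclideanSpace ℝ (Fin M) → ℝ) : Prop :=
  Continuous (fun p : EuclideanSpace ℝ (Fin M) × EuclideanSpace ℝ (Fin M) => F p.1 p.2) ∧
  ∀ K : ℝ, 0 ≤ K → ∀ x t, F x (K • t) = K * F x t

/-- `L` is the line integral `∫_C F` of `F` along the curve `C ↔ f : [a,b] → ℝ^M`:
the limit, as the mesh tends to `0`, of the Riemann-type sums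
`Σᵢ F(f(ξᵢ), f(xᵢ) − f(xᵢ₋₁))` over tagged partitions of `[a,b]`. -/
def IsLineIntegral {M : ℕ} (F : EuclideanSpace ℝ (Fin M) → EuclideanSpace ℝ (Fin M) → ℝ)
    (f : ℝ → EuclideanSpace ℝ (Fin M)) (a b : ℝ) (L : ℝ) : Prop :=
  ∀ ε > (0 : ℝ), ∃ δ > (0 : ℝ), ∀ P : IntervalPartition a b, P.mesh < δ →
    ∀ ξ : Fin P.n → ℝ, (∀ i, ξ i ∈ Set.Icc (P.x i.castSucc) (P.x i.succ)) →
    |(∑ i : Fin P.n, F (f (ξ i)) (f (P.x i.succ) - f (P.x i.castSucc))) - L| < ε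

/-!
Write `s` for the arc length. The chord inequality `‖f y - f x‖ ≤ s y - s x` gives `‖f'‖ ≤ s'`
wherever both derivatives exist. Conversely, take points `u 0 ≤ ⋯ ≤ u n` whose inscribed polygon
has length within `ε` of `ℓ(C)`, and let `σ t` be the length of that polygon with every vertex
truncated at time `t`. Just to the right of any `x` no vertex intervenes, so
`σ y - σ x ≤ ‖f y - f x‖` and `σ' ≤ ‖f'‖`; and `s - σ` is monotone with total increase `< ε`.
Hence `∫ (s' - ‖f'‖)⁺ ≤ ∫ (s - σ)' ≤ ε` for every `ε > 0`, so `s' ≤ ‖f'‖` almost everywhere.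

The length `ℓ(C)` is the variation `eVariationOn f (Icc a b)`, so `s` is `variationOnFromTo`.
-/

open Set

section CurveLength

variable {M : ℕ} (f : ℝ → EuclideanSpace ℝ (Fin M))

lemma IntervalPartition.x_mem_Icc {a b : ℝ} (P : IntervalPartition a b) (i : Fin (P.n + 1)) :
    P.x i ∈ Icc a b :=
  ⟨P.first.symm.le.trans (P.mono.monotone (Fin.zero_le i)),
    (P.mono.monotone (Fin.le_last i)).trans P.last.le⟩

lemma ofReal_inscribedSum_le_eVariationOn {a b : ℝ} (P : IntervalPartition a b) :
    ENNReal.ofReal (inscribedSum f P) ≤ eVariationOn f (Icc a b) := by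
  set u : ℕ → ℝ := fun i => P.x (Fin.clamp i P.n)
  have hu : Monotone u := P.mono.monotone.comp Fin.clamp_monotone
  calc ENNReal.ofReal (inscribedSum f P)
      = ∑ i ∈ Finset.range P.n, edist (f (u (i + 1))) (f (u i)) := by
        rw [inscribedSum, ENNReal.ofReal_sum_of_nonneg fun _ _ => norm_nonneg _,
          ← Fin.sum_univ_eq_sum_range]
        refine Finset.sum_congr rfl fun i _ => ?_
        have hsucc : Fin.clamp (i + 1) P.n = i.succ := Fin.ext (by simp [Fin.clamp])
        have hcast : Fin.clamp i P.n = i.castSucc := Fin.ext (by simp [Fin.clamp, i.isLt.le])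
        rw [edist_dist, dist_eq_norm]
        simp only [u, hsucc, hcast]
    _ ≤ eVariationOn f (Icc a b) := eVariationOn.sum_le hu fun i => P.x_mem_Icc _

def IntervalPartition.refl (a : ℝ) : IntervalPartition a a :=
  ⟨0, fun _ => a, Fin.strictMono_iff_lt_succ.2 fun i => i.elim0, rfl, rfl⟩

lemma exists_inscribedSum_add_norm_le {a c e : ℝ} (P : IntervalPartition a c) (hce : c ≤ e) :
    ∃ Q : IntervalPartition a e, inscribedSum f P + ‖f e - f c‖ ≤ inscribedSum f Q := by
  obtain rfl | hce := hce.eq_or_lt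
  · exact ⟨P, by simp⟩
  refine ⟨⟨P.n + 1, Fin.snoc P.x e, ?_, ?_, ?_⟩, le_of_eq ?_⟩
  · rw [← Fin.insertNth_last']
    exact Fin.strictMono_insertNth_last P.mono e (by rwa [P.last])
  · show Fin.snoc (α := fun _ => ℝ) P.x e (Fin.castSucc 0) = a
    rw [Fin.snoc_castSucc, P.first]
  · simp
  · rw [inscribedSum, inscribedSum, Fin.sum_univ_castSucc]
    simp only [Fin.succ_castSucc, Fin.snoc_castSucc, Fin.succ_last, Fin.snoc_last, P.last]

lemma eVariationOn_le_curveLength (a b : ℝ) : eVariationOn f (Icc a b) ≤ curveLength f a b := by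
  refine iSup_le fun ⟨n, u, hu, hus⟩ => ?_
  have hpoly : ∀ m, ∃ P : IntervalPartition a (u m),
      ∑ i ∈ Finset.range m, ‖f (u (i + 1)) - f (u i)‖ ≤ inscribedSum f P := by
    intro m
    induction m with
    | zero =>
      obtain ⟨P, hP⟩ := exists_inscribedSum_add_norm_le f (.refl a) (hus 0).1
      rw [show inscribedSum f (IntervalPartition.refl a) = 0 from Fin.sum_univ_zero _,
        zero_add] at hP
      exact ⟨P, by simpa using (norm_nonneg _).trans hP⟩
    | succ m ih =>
      obtain ⟨P, hP⟩ := ih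
      obtain ⟨Q, hQ⟩ := exists_inscribedSum_add_norm_le f P (hu m.le_succ)
      exact ⟨Q, by rw [Finset.sum_range_succ]; linarith⟩
  obtain ⟨P, hP⟩ := hpoly n
  obtain ⟨Q, hQ⟩ := exists_inscribedSum_add_norm_le f P (hus n).2
  calc ∑ i ∈ Finset.range n, edist (f (u (i + 1))) (f (u i))
      = ENNReal.ofReal (∑ i ∈ Finset.range n, ‖f (u (i + 1)) - f (u i)‖) := by
        rw [ENNReal.ofReal_sum_of_nonneg fun _ _ => norm_nonneg _]
        simp only [edist_dist, dist_eq_norm]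
    _ ≤ ENNReal.ofReal (inscribedSum f Q) :=
        ENNReal.ofReal_le_ofReal (by linarith [norm_nonneg (f b - f (u n))])
    _ ≤ curveLength f a b := le_iSup (fun Q => ENNReal.ofReal (inscribedSum f Q)) Q

theorem curveLength_eq_eVariationOn (a b : ℝ) : curveLength f a b = eVariationOn f (Icc a b) :=
  le_antisymm (iSup_le (ofReal_inscribedSum_le_eVariationOn f))
    (eVariationOn_le_curveLength f a b)

end CurveLength

open scoped Topology

section InscribedLength

variable {E : Type*} [SeminormedAddCommGroup E]

def inscribedLengthUpTo (f : ℝ → E) (u : ℕ → ℝ) (n : ℕ) (t : ℝ) : ℝ :=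
  ∑ i ∈ Finset.range n, ‖f (min (u (i + 1)) t) - f (min (u i) t)‖

/-- Between the truncation times `t ≤ t'`, the segment of the inscribed polygon over `[p, q]`
grows by at most the chord over `[p, q]` clamped to `[t, t']`. -/
lemma norm_sub_min_sub_norm_sub_min_le (f : ℝ → E) {p q t t' : ℝ} (hpq : p ≤ q)
    (htt' : t ≤ t') :
    ‖f (min q t') - f (min p t')‖ - ‖f (min q t) - f (min p t)‖ ≤
      ‖f (max t (min q t')) - f (max t (min p t'))‖ := by
  rcases le_total t' p with ht'p | hpt'
  · simp [min_eq_right ht'p, min_eq_right (ht'p.trans hpq)]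
  rcases le_total q t with hqt | htq
  · simp [min_eq_left hqt, min_eq_left (hpq.trans hqt), min_eq_left (hqt.trans htt'),
      min_eq_left (hpq.trans (hqt.trans htt'))]
  rcases le_total p t with hpt | htp
  · rw [min_eq_left hpt, min_eq_left hpt', min_eq_right htq, max_eq_left hpt,
      max_eq_right (le_min htq htt')]
    simpa using norm_sub_norm_le (f (min q t') - f p) (f t - f p)
  · rw [min_eq_right htp, min_eq_right (htp.trans hpq), min_eq_left hpt',
      max_eq_right htp, max_eq_right (le_min htq htt')]
    simp

lemma ofReal_inscribedLengthUpTo_sub_le_eVariationOn (f : ℝ → E) {u : ℕ → ℝ}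
    (hu : Monotone u) (n : ℕ) {t t' : ℝ} (htt' : t ≤ t') {S : Set ℝ}
    (hS : ∀ i ≤ n, max t (min (u i) t') ∈ S) :
    ENNReal.ofReal (inscribedLengthUpTo f u n t' - inscribedLengthUpTo f u n t) ≤
      eVariationOn f S := by
  set w : ℕ → ℝ := fun i => max t (min (u i) t')
  have hw : Monotone w := fun i j hij => max_le_max le_rfl (min_le_min (hu hij) le_rfl)
  calc ENNReal.ofReal (inscribedLengthUpTo f u n t' - inscribedLengthUpTo f u n t)
      ≤ ENNReal.ofReal (∑ i ∈ Finset.range n, ‖f (w (i + 1)) - f (w i)‖) := by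
        refine ENNReal.ofReal_le_ofReal ?_
        rw [inscribedLengthUpTo, inscribedLengthUpTo, ← Finset.sum_sub_distrib]
        exact Finset.sum_le_sum fun i _ =>
          norm_sub_min_sub_norm_sub_min_le f (hu i.le_succ) htt'
    _ = ∑ i ∈ Finset.range n, edist (f (w (i + 1))) (f (w i)) := by
        rw [ENNReal.ofReal_sum_of_nonneg fun _ _ => norm_nonneg _]
        simp only [edist_dist, dist_eq_norm]
    _ ≤ eVariationOn f S := eVariationOn.sum_le_of_monotoneOn_Iic (hw.monotoneOn _) hS

lemma LocallyBoundedVariationOn.monotoneOn_variationOnFromTo_sub_inscribedLengthUpTo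
    {f : ℝ → E} {s : Set ℝ} (hf : LocallyBoundedVariationOn f s) {a : ℝ} (ha : a ∈ s)
    {u : ℕ → ℝ} (hu : Monotone u) {n : ℕ} (hus : ∀ i ≤ n, u i ∈ s) :
    MonotoneOn (fun t => variationOnFromTo f s a t - inscribedLengthUpTo f u n t) s := by
  intro t ht t' ht' htt'
  have hmem : ∀ i ≤ n, max t (min (u i) t') ∈ s ∩ Icc t t' := by
    intro i hi
    refine ⟨?_, le_max_left _ _, max_le htt' (min_le_right _ _)⟩
    rcases max_choice t (min (u i) t') with h | h <;> rw [h]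
    · exact ht
    · rcases min_choice (u i) t' with h' | h' <;> rw [h']
      exacts [hus i hi, ht']
  have hle := ofReal_inscribedLengthUpTo_sub_le_eVariationOn f hu n htt' hmem
  rw [ENNReal.ofReal_le_iff_le_toReal (hf t t' ht ht'), ← variationOnFromTo.eq_of_le _ _ htt',
    ← variationOnFromTo.sub_right hf ha ht' ht] at hle
  dsimp only
  linarith

lemma eventually_inscribedLengthUpTo_sub_le_norm_sub (f : ℝ → E) {u : ℕ → ℝ}
    (hu : Monotone u) (n : ℕ) (x : ℝ) :
    ∀ᶠ y in 𝓝[>] x, inscribedLengthUpTo f u n y - inscribedLengthUpTo f u n x ≤ ‖f y - f x‖ := by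
  have hgap : ∀ᶠ y in 𝓝[>] x, ∀ i ∈ Iic n, u i ∉ Ioo x y := by
    refine (finite_Iic n).eventually_all.2 fun i _ => ?_
    rcases lt_or_ge x (u i) with hx | hx
    · filter_upwards [Ioo_mem_nhdsGT hx] with y hy using fun h => h.2.not_gt hy.2
    · exact Eventually.of_forall fun y h => h.1.not_ge hx
  filter_upwards [hgap, self_mem_nhdsWithin] with y hy hxy
  have hmem : ∀ i ≤ n, max x (min (u i) y) ∈ ({x, y} : Set ℝ) := by
    intro i hi
    rcases le_or_gt (u i) x with h | h
    · exact Or.inl (max_eq_left ((min_le_left _ _).trans h))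
    · have hyu : y ≤ u i := not_lt.1 fun h' => hy i hi ⟨h, h'⟩
      exact Or.inr (by rw [min_eq_right hyu, max_eq_right hxy.le]; rfl)
  have hle := ofReal_inscribedLengthUpTo_sub_le_eVariationOn f hu n hxy.le hmem
  rwa [eVariationOn.pair, edist_dist, dist_comm, dist_eq_norm,
    ENNReal.ofReal_le_ofReal_iff (norm_nonneg _)] at hle

end InscribedLength

lemma BoundedVariationOn.exists_lt_sum_dist_add {α F : Type*} [LinearOrder α]
    [PseudoMetricSpace F] {f : α → F} {s : Set α} (hf : BoundedVariationOn f s)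
    (hs : s.Nonempty) {ε : ℝ} (hε : 0 < ε) :
    ∃ u : ℕ → α, ∃ n, Monotone u ∧ (∀ i, u i ∈ s) ∧
      (eVariationOn f s).toReal < ∑ i ∈ Finset.range n, dist (f (u (i + 1))) (f (u i)) + ε := by
  obtain ⟨x, hx⟩ := hs
  have : Nonempty (ℕ × {u : ℕ → α // Monotone u ∧ ∀ i, u i ∈ s}) :=
    ⟨(0, ⟨fun _ => x, monotone_const, fun _ => hx⟩)⟩
  obtain ⟨⟨n, u, hu, hus⟩, hlt⟩ := lt_iSup_iff.1
    ((ENNReal.lt_add_right hf (ENNReal.ofReal_pos.2 hε).ne').trans_eq (ENNReal.iSup_add _))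
  refine ⟨u, n, hu, hus, ENNReal.toReal_lt_of_lt_ofReal ?_⟩
  rw [ENNReal.ofReal_add (Finset.sum_nonneg fun _ _ => dist_nonneg) hε.le,
    ENNReal.ofReal_sum_of_nonneg fun _ _ => dist_nonneg]
  simpa only [edist_dist] using hlt

section RightSlopes

variable {E : Type*} [NormedAddCommGroup E] [NormedSpace ℝ E] {φ : ℝ → ℝ} {f : ℝ → E}
  {φ' : ℝ} {f' : E} {x : ℝ}

lemma norm_slope_of_lt {y : ℝ} (hxy : x < y) : ‖slope f x y‖ = ‖f y - f x‖ / (y - x) := by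
  rw [slope_def_module, norm_smul, norm_inv, Real.norm_of_nonneg (sub_pos.2 hxy).le,
    ← div_eq_inv_mul]

lemma HasDerivAt.le_norm_of_eventually_sub_le_norm_sub (hφ : HasDerivAt φ φ' x)
    (hf : HasDerivAt f f' x) (h : ∀ᶠ y in 𝓝[>] x, φ y - φ x ≤ ‖f y - f x‖) : φ' ≤ ‖f'‖ := by
  refine le_of_tendsto_of_tendsto (hφ.tendsto_slope.mono_left (nhdsGT_le_nhdsNE x))
    (hf.tendsto_slope.mono_left (nhdsGT_le_nhdsNE x)).norm ?_
  filter_upwards [h, self_mem_nhdsWithin] with y hy hxy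
  rw [slope_def_field, norm_slope_of_lt hxy]
  exact div_le_div_of_nonneg_right hy (sub_pos.2 hxy).le

lemma HasDerivAt.norm_le_of_eventually_norm_sub_le_sub (hφ : HasDerivAt φ φ' x)
    (hf : HasDerivAt f f' x) (h : ∀ᶠ y in 𝓝[>] x, ‖f y - f x‖ ≤ φ y - φ x) : ‖f'‖ ≤ φ' := by
  refine le_of_tendsto_of_tendsto
    (hf.tendsto_slope.mono_left (nhdsGT_le_nhdsNE x)).norm
    (hφ.tendsto_slope.mono_left (nhdsGT_le_nhdsNE x)) ?_
  filter_upwards [h, self_mem_nhdsWithin] with y hy hxy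
  rw [slope_def_field, norm_slope_of_lt hxy]
  exact div_le_div_of_nonneg_right hy (sub_pos.2 hxy).le

end RightSlopes

lemma MonotoneOn.lintegral_ofReal_deriv_le {g : ℝ → ℝ} {a b : ℝ} (hg : MonotoneOn g (Icc a b))
    (hab : a ≤ b) :
    ∫⁻ x in Icc a b, ENNReal.ofReal (deriv g x) ≤ ENNReal.ofReal (g b - g a) := by
  have hg' : MonotoneOn g (uIcc a b) := by rwa [uIcc_of_le hab]
  have hnonneg : ∀ x ∈ Ioo a b, 0 ≤ deriv g x := fun x hx => by
    rw [← derivWithin_of_mem_nhds (Icc_mem_nhds hx.1 hx.2)]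
    exact hg.derivWithin_nonneg
  calc ∫⁻ x in Icc a b, ENNReal.ofReal (deriv g x)
      = ENNReal.ofReal (∫ x in a..b, deriv g x) := by
        rw [intervalIntegral.integral_of_le hab, integral_Ioc_eq_integral_Ioo,
          ← restrict_Ioo_eq_restrict_Icc, ofReal_integral_eq_lintegral_ofReal
            (hg'.intervalIntegrable_deriv.1.mono_set Ioo_subset_Ioc_self)
            ((ae_restrict_iff' measurableSet_Ioo).2 (ae_of_all _ hnonneg))]
    _ ≤ ENNReal.ofReal (g b - g a) := by
        refine ENNReal.ofReal_le_ofReal (hg'.intervalIntegral_deriv_mem_uIcc.2.trans_eq ?_)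
        exact max_eq_right (sub_nonneg.2 (hg (left_mem_Icc.2 hab) (right_mem_Icc.2 hab) hab))

section ArcLengthDerivative

variable {E : Type*} [NormedAddCommGroup E] [NormedSpace ℝ E] [FiniteDimensional ℝ E]
  {f : ℝ → E} {a b : ℝ}

lemma LocallyBoundedVariationOn.ae_differentiableAt_of_mem_Ioo
    (hf : LocallyBoundedVariationOn f (Icc a b)) :
    ∀ᵐ x, x ∈ Ioo a b → DifferentiableAt ℝ f x := by
  filter_upwards [hf.ae_differentiableWithinAt_of_mem] with x hx hxab
  exact (hx (Ioo_subset_Icc_self hxab)).differentiableAt (Icc_mem_nhds hxab.1 hxab.2)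

lemma BoundedVariationOn.lintegral_ofReal_deriv_variationOnFromTo_sub_norm_deriv_le
    (hf : BoundedVariationOn f (Icc a b)) (hab : a ≤ b) {ε : ℝ} (hε : 0 < ε) :
    ∫⁻ x in Icc a b, ENNReal.ofReal
      (deriv (variationOnFromTo f (Icc a b) a) x - ‖deriv f x‖) ≤ ENNReal.ofReal ε := by
  set s := variationOnFromTo f (Icc a b) a
  have ha : a ∈ Icc a b := left_mem_Icc.2 hab
  obtain ⟨u, n, hu, hus, hlt⟩ := hf.exists_lt_sum_dist_add (nonempty_Icc.2 hab) hε
  set L := inscribedLengthUpTo f u n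
  set g := fun t => s t - L t
  have hg : MonotoneOn g (Icc a b) :=
    hf.locallyBoundedVariationOn.monotoneOn_variationOnFromTo_sub_inscribedLengthUpTo ha hu
      fun i _ => hus i
  have hs : MonotoneOn s (Icc a b) := variationOnFromTo.monotoneOn hf.locallyBoundedVariationOn ha
  have hderiv : ∀ᵐ x, x ∈ Ioo a b → deriv s x - ‖deriv f x‖ ≤ deriv g x := by
    filter_upwards [hf.locallyBoundedVariationOn.ae_differentiableAt_of_mem_Ioo,
      hs.locallyBoundedVariationOn.ae_differentiableAt_of_mem_Ioo,
      hg.locallyBoundedVariationOn.ae_differentiableAt_of_mem_Ioo] with x hfx hsx hgx hx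
    have hL : HasDerivAt L (deriv s x - deriv g x) x := by
      have hLsg : L = s - g := by
        ext t
        simp only [g, Pi.sub_apply, sub_sub_cancel]
      rw [hLsg]
      exact (hsx hx).hasDerivAt.sub (hgx hx).hasDerivAt
    linarith [hL.le_norm_of_eventually_sub_le_norm_sub (hfx hx).hasDerivAt
      (eventually_inscribedLengthUpTo_sub_le_norm_sub f hu n x)]
  have hgab : g b - g a < ε := by
    have hLa : L a = 0 := Finset.sum_eq_zero fun i _ => by
      simp [min_eq_right (hus i).1, min_eq_right (hus (i + 1)).1]
    have hLb : L b = ∑ i ∈ Finset.range n, dist (f (u (i + 1))) (f (u i)) :=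
      Finset.sum_congr rfl fun i _ => by
        rw [min_eq_left (hus i).2, min_eq_left (hus (i + 1)).2, dist_eq_norm]
    have hsa : s a = 0 := variationOnFromTo.self _ _ a
    have hsb : s b = (eVariationOn f (Icc a b)).toReal := by
      rw [show s b = variationOnFromTo f (Icc a b) a b from rfl,
        variationOnFromTo.eq_of_le _ _ hab, inter_self]
    simp only [g, hLa, hLb, hsa, hsb]
    linarith
  calc ∫⁻ x in Icc a b, ENNReal.ofReal (deriv s x - ‖deriv f x‖)
      ≤ ∫⁻ x in Icc a b, ENNReal.ofReal (deriv g x) := by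
        rw [← restrict_Ioo_eq_restrict_Icc]
        exact lintegral_mono_ae ((ae_restrict_iff' measurableSet_Ioo).2
          (hderiv.mono fun x hx hx' => ENNReal.ofReal_le_ofReal (hx hx')))
    _ ≤ ENNReal.ofReal (g b - g a) := hg.lintegral_ofReal_deriv_le hab
    _ ≤ ENNReal.ofReal ε := ENNReal.ofReal_le_ofReal hgab.le

lemma BoundedVariationOn.ae_deriv_variationOnFromTo_le_norm_deriv
    (hf : BoundedVariationOn f (Icc a b)) :
    ∀ᵐ x, x ∈ Icc a b → deriv (variationOnFromTo f (Icc a b) a) x ≤ ‖deriv f x‖ := by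
  rcases lt_or_ge b a with hba | hab
  · exact ae_of_all _ fun x hx => absurd (hx.1.trans hx.2) hba.not_ge
  have hzero : ∫⁻ x in Icc a b, ENNReal.ofReal
      (deriv (variationOnFromTo f (Icc a b) a) x - ‖deriv f x‖) = 0 :=
    nonpos_iff_eq_zero.1 <| ENNReal.le_of_forall_pos_le_add fun ε hε _ => by
      simpa using hf.lintegral_ofReal_deriv_variationOnFromTo_sub_norm_deriv_le hab
        (NNReal.coe_pos.2 hε)
  have hmeas : Measurable fun x =>
      deriv (variationOnFromTo f (Icc a b) a) x - ‖deriv f x‖ :=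
    (measurable_deriv _).sub (stronglyMeasurable_deriv f).norm.measurable
  rw [lintegral_eq_zero_iff' hmeas.ennreal_ofReal.aemeasurable] at hzero
  rw [← ae_restrict_iff' measurableSet_Icc]
  filter_upwards [hzero] with x hx
  simpa [sub_nonpos] using hx

theorem BoundedVariationOn.ae_hasDerivAt_variationOnFromTo
    (hf : BoundedVariationOn f (Icc a b)) :
    ∀ᵐ x, x ∈ Ioo a b →
      DifferentiableAt ℝ f x ∧ HasDerivAt (variationOnFromTo f (Icc a b) a) ‖deriv f x‖ x := by
  rcases lt_or_ge b a with hba | hab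
  · exact ae_of_all _ fun x hx => absurd (hx.1.trans hx.2) hba.not_gt
  have hbv := hf.locallyBoundedVariationOn
  have ha : a ∈ Icc a b := left_mem_Icc.2 hab
  have hs := variationOnFromTo.monotoneOn hbv ha
  filter_upwards [hbv.ae_differentiableAt_of_mem_Ioo,
    hs.locallyBoundedVariationOn.ae_differentiableAt_of_mem_Ioo,
    hf.ae_deriv_variationOnFromTo_le_norm_deriv] with x hfx hsx hle hx
  have hchord : ∀ᶠ y in 𝓝[>] x, ‖f y - f x‖ ≤
      variationOnFromTo f (Icc a b) a y - variationOnFromTo f (Icc a b) a x := by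
    filter_upwards [Ioo_mem_nhdsGT hx.2, self_mem_nhdsWithin] with y hy hxy
    have hxI : x ∈ Icc a b := Ioo_subset_Icc_self hx
    have hyI : y ∈ Icc a b := ⟨hx.1.le.trans hxy.le, hy.2.le⟩
    rw [variationOnFromTo.sub_right hbv ha hyI hxI, variationOnFromTo.eq_of_le _ _ hxy.le,
      ← dist_eq_norm, dist_comm]
    exact (hbv x y hxI hyI).dist_le ⟨hxI, le_rfl, hxy.le⟩ ⟨hyI, hxy.le, le_rfl⟩
  refine ⟨hfx hx, (hsx hx).hasDerivAt.congr_deriv (le_antisymm (hle (Ioo_subset_Icc_self hx)) ?_)⟩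
  exact (hsx hx).hasDerivAt.norm_le_of_eventually_norm_sub_le_sub (hfx hx).hasDerivAt hchord

end ArcLengthDerivative

theorem deriv_arcLength_eq_norm_deriv_general {M : ℕ} (a b : ℝ)
    (f : ℝ → EuclideanSpace ℝ (Fin M))
    (hrect : curveLength f a b < ⊤) :
    ∀ᵐ x ∂(volume : Measure ℝ), x ∈ Set.Icc a b →
      DifferentiableAt ℝ (fun y => (curveLength f a y).toReal) x ∧
      DifferentiableAt ℝ f x ∧
      deriv (fun y => (curveLength f a y).toReal) x = ‖deriv f x‖ := by
  have hf : BoundedVariationOn f (Icc a b) := by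
    rw [BoundedVariationOn, ← curveLength_eq_eVariationOn]
    exact hrect.ne
  filter_upwards [Ioo_ae_eq_Icc.symm.le, hf.ae_hasDerivAt_variationOnFromTo] with x hIoo hderiv hx
  have hx : x ∈ Ioo a b := hIoo hx
  have hlocal : (fun y => (curveLength f a y).toReal) =ᶠ[𝓝 x]
      variationOnFromTo f (Icc a b) a := by
    filter_upwards [Icc_mem_nhds hx.1 hx.2] with y hy
    rw [variationOnFromTo.eq_of_le _ _ hy.1, inter_eq_right.2 (Icc_subset_Icc_right hy.2),
      curveLength_eq_eVariationOn]
  obtain ⟨hfx, hsx⟩ := hderiv hx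
  have harc := hsx.congr_of_eventuallyEq hlocal
  exact ⟨harc.differentiableAt, hfx, harc.deriv⟩

/-- For a continuous rectifiable curve `C ↔ f : [a,b] → ℝ^M` with arc length
function `s(x) = ℓ(f on [a,x])`, for Lebesgue-a.e. `x ∈ [a,b]` both `s′(x)` and `f′(x)`
exist and `s′(x) = ‖f′(x)‖`. -/
theorem deriv_arcLength_eq_norm_deriv {M : ℕ} (a b : ℝ) (hab : a < b)
    (f : ℝ → EuclideanSpace ℝ (Fin M))
    (hcont : ContinuousOn f (Set.Icc a b)) (hrect : curveLength f a b < ⊤) :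
    ∀ᵐ x ∂(volume : Measure ℝ), x ∈ Set.Icc a b →
      DifferentiableAt ℝ (fun y => (curveLength f a y).toReal) x ∧
      DifferentiableAt ℝ f x ∧
      deriv (fun y => (curveLength f a y).toReal) x = ‖deriv f x‖ :=
  deriv_arcLength_eq_norm_deriv_general a b f hrect

end
end

section
/- Let f : [a,b] → ℝ^M and g : [c,d] → ℝ^M (a < b, c < d) be curves that are Fréchet equivalent. Then the curves C ↔ f and D ↔ g have equal length: ℓ(C) = ℓ(D). -/
open scoped BigOperators ENNReal
open MeasureTheory Filter

noncomputable section

/-! Moving each vertex of an inscribed polygon by less than `ε` changes each side by less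
than `2 ε`. The reparametrization `φ` carries a partition of `[a,b]` to one of `[c,d]`, so taking
`ε` small compared with the number of sides gives `ℓ(C) ≤ ℓ(D)`; the reverse inequality comes
from the inverse of `φ`, which exists by the intermediate value theorem. -/

theorem sum_norm_sub_le_sum_norm_sub_add {E : Type*} [SeminormedAddCommGroup E] {n : ℕ}
    {u v : Fin (n + 1) → E} {ε : ℝ} (h : ∀ i, ‖u i - v i‖ ≤ ε) :
    ∑ i : Fin n, ‖u i.succ - u i.castSucc‖ ≤
      ∑ i : Fin n, ‖v i.succ - v i.castSucc‖ + 2 * n * ε := by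
  calc ∑ i : Fin n, ‖u i.succ - u i.castSucc‖
      ≤ ∑ i : Fin n, (‖v i.succ - v i.castSucc‖ + 2 * ε) := by
        refine Finset.sum_le_sum fun i _ => ?_
        have := dist_triangle4 (u i.succ) (v i.succ) (v i.castSucc) (u i.castSucc)
        simp only [dist_eq_norm] at this
        rw [norm_sub_rev (v i.castSucc)] at this
        linarith [h i.succ, h i.castSucc]
    _ = ∑ i : Fin n, ‖v i.succ - v i.castSucc‖ + 2 * n * ε := by
        simp only [Finset.sum_add_distrib, Finset.sum_const, Finset.card_univ, Fintype.card_fin,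
          nsmul_eq_mul]
        ring

namespace IntervalPartition

variable {a b c d : ℝ}

theorem mem_Icc (P : IntervalPartition a b) (i : Fin (P.n + 1)) : P.x i ∈ Set.Icc a b :=
  ⟨P.first.ge.trans (P.mono.monotone (Fin.zero_le i)),
    (P.mono.monotone (Fin.le_last i)).trans P.last.le⟩

def map (P : IntervalPartition a b) (φ : ℝ → ℝ) (hφ : StrictMonoOn φ (Set.Icc a b))
    (ha : φ a = c) (hb : φ b = d) : IntervalPartition c d where
  n := P.n
  x := φ ∘ P.x
  mono _ _ hij := hφ (P.mem_Icc _) (P.mem_Icc _) (P.mono hij)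
  first := by simp [P.first, ha]
  last := by simp [P.last, hb]

end IntervalPartition

section CurveLength

variable {M : ℕ} {f g : ℝ → EuclideanSpace ℝ (Fin M)} {a b c d : ℝ}

theorem ofReal_inscribedSum_le_curveLength (P : IntervalPartition a b) :
    ENNReal.ofReal (inscribedSum f P) ≤ curveLength f a b :=
  le_iSup (fun P : IntervalPartition a b => ENNReal.ofReal (inscribedSum f P)) P

theorem inscribedSum_le_inscribedSum_map_add (P : IntervalPartition a b) {φ : ℝ → ℝ}
    (hφ : StrictMonoOn φ (Set.Icc a b)) (ha : φ a = c) (hb : φ b = d) {ε : ℝ}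
    (hclose : ∀ x ∈ Set.Icc a b, ‖f x - g (φ x)‖ ≤ ε) :
    inscribedSum f P ≤ inscribedSum g (P.map φ hφ ha hb) + 2 * P.n * ε :=
  sum_norm_sub_le_sum_norm_sub_add fun i => hclose _ (P.mem_Icc i)

theorem curveLength_le_of_forall_exists_strictMonoOn
    (h : ∀ ε > (0 : ℝ), ∃ φ : ℝ → ℝ, StrictMonoOn φ (Set.Icc a b) ∧ φ a = c ∧ φ b = d ∧
      ∀ x ∈ Set.Icc a b, ‖f x - g (φ x)‖ < ε) :
    curveLength f a b ≤ curveLength g c d := by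
  refine iSup_le fun P => ENNReal.le_of_forall_pos_le_add fun ε hε _ => ?_
  obtain ⟨φ, hφ, ha, hb, hclose⟩ := h (ε / (2 * P.n + 1)) (by positivity)
  have hsmall : 2 * P.n * (ε / (2 * P.n + 1) : ℝ) ≤ ε := by
    rw [mul_div_assoc', div_le_iff₀ (by positivity)]
    nlinarith [ε.coe_nonneg]
  calc ENNReal.ofReal (inscribedSum f P)
      ≤ ENNReal.ofReal (inscribedSum g (P.map φ hφ ha hb) + ε) :=
        ENNReal.ofReal_le_ofReal <| (inscribedSum_le_inscribedSum_map_add P hφ ha hb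
          fun x hx => (hclose x hx).le).trans (by linarith)
    _ ≤ ENNReal.ofReal (inscribedSum g (P.map φ hφ ha hb)) + ε :=
        ENNReal.ofReal_add_le.trans_eq (by rw [ENNReal.ofReal_coe_nnreal])
    _ ≤ curveLength g c d + ε := by gcongr; exact ofReal_inscribedSum_le_curveLength _

end CurveLength

theorem IsIncrHomeo.exists_strictMonoOn_rightInvOn {φ : ℝ → ℝ} {a b c d : ℝ}
    (hφ : IsIncrHomeo φ a b c d) (hab : a ≤ b) :
    ∃ ψ : ℝ → ℝ, StrictMonoOn ψ (Set.Icc c d) ∧ ψ c = a ∧ ψ d = b ∧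
      ∀ y ∈ Set.Icc c d, ψ y ∈ Set.Icc a b ∧ φ (ψ y) = y := by
  obtain ⟨hcont, hmono, rfl, rfl⟩ := hφ
  have hsurj : Set.SurjOn φ (Set.Icc a b) (Set.Icc (φ a) (φ b)) :=
    intermediate_value_Icc hab hcont
  have hmaps := hsurj.mapsTo_invFunOn
  have hinv := hsurj.rightInvOn_invFunOn
  have hinj : ∀ x ∈ Set.Icc a b, Function.invFunOn φ (Set.Icc a b) (φ x) = x := fun x hx =>
    have hφx : φ x ∈ Set.Icc (φ a) (φ b) := hmono.monotoneOn.mapsTo_Icc hx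
    hmono.injOn (hmaps hφx) hx (hinv hφx)
  refine ⟨Function.invFunOn φ (Set.Icc a b), fun y₁ hy₁ y₂ hy₂ hlt => ?_,
    hinj a (Set.left_mem_Icc.2 hab), hinj b (Set.right_mem_Icc.2 hab),
    fun y hy => ⟨hmaps hy, hinv hy⟩⟩
  rwa [← hmono.lt_iff_lt (hmaps hy₁) (hmaps hy₂), hinv hy₁, hinv hy₂]

theorem length_eq_of_frechetEquiv_general {M : ℕ} (a b c d : ℝ) (hab : a < b)
    (f g : ℝ → EuclideanSpace ℝ (Fin M)) (hfg : FrechetEquiv f a b g c d) :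
    curveLength f a b = curveLength g c d := by
  refine le_antisymm (curveLength_le_of_forall_exists_strictMonoOn fun ε hε => ?_)
    (curveLength_le_of_forall_exists_strictMonoOn fun ε hε => ?_) <;>
    obtain ⟨φ, hφ, hclose⟩ := hfg ε hε
  · exact ⟨φ, hφ.2.1, hφ.2.2.1, hφ.2.2.2, hclose⟩
  · obtain ⟨ψ, hψ, hc, hd, hψφ⟩ := hφ.exists_strictMonoOn_rightInvOn hab.le
    refine ⟨ψ, hψ, hc, hd, fun y hy => ?_⟩
    calc ‖g y - f (ψ y)‖ = ‖f (ψ y) - g (φ (ψ y))‖ := by rw [(hψφ y hy).2, norm_sub_rev]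
      _ < ε := hclose _ (hψφ y hy).1

/-- Fréchet equivalent curves have equal length: if `f : [a,b] → ℝ^M` and
`g : [c,d] → ℝ^M` are Fréchet equivalent, then `ℓ(C) = ℓ(D)`. -/
theorem length_eq_of_frechetEquiv {M : ℕ} (a b c d : ℝ) (hab : a < b) (hcd : c < d)
    (f g : ℝ → EuclideanSpace ℝ (Fin M)) (hfg : FrechetEquiv f a b g c d) :
    curveLength f a b = curveLength g c d :=
  length_eq_of_frechetEquiv_general a b c d hab f g hfg

end
end

section
/- Let C₀ ↔ f₀ : [a,b] → ℝ^M be a continuous rectifiable curve and let C_k ↔ f_k : [a,b] → ℝ^M (k = 1, 2, …) be continuous rectifiable curves such that f_k converges uniformly to f₀ on [a,b] and ℓ(C_k) → ℓ(C₀). Then the inscribed sums converge to the lengths uniformly in k: for every ε > 0 there exists δ > 0 such that for every k ≥ 1 and every partition Q of [a,b] with mesh ‖Q‖ < δ, one has ℓ(C_k) − V(f_k;Q) < ε. -/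
open scoped BigOperators ENNReal
open MeasureTheory Filter

noncomputable section

/-!
A uniformly convergent sequence of continuous maps on a compact interval is uniformly
equicontinuous. If the oscillation of `f` at scale `‖Q‖` is at most `ω`, moving every point of a
partition `P` to the last point of `Q` not after it shows `V(f;P) ≤ V(f;Q) + 2 n_P ω`, where `n_P`
is the number of intervals of `P`. So it suffices to approximate every `ℓ(C_k)` within `ε/2` by
inscribed sums over partitions with a number of intervals bounded independently of `k`: a
partition `P` nearly realizing `ℓ(C₀)` does this for all large `k`, because `V(f_k;P) → V(f₀;P)`
and `ℓ(C_k) → ℓ(C₀)`, and the finitely many remaining `k` are handled one at a time.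
-/

lemma Filter.eventually_forall_of_eventually_forall_ge {α : Type*} {L : Filter α}
    {p : ℕ → α → Prop} (h : ∀ k, ∀ᶠ x in L, p k x) (K : ℕ) (hK : ∀ᶠ x in L, ∀ k ≥ K, p k x) :
    ∀ᶠ x in L, ∀ k, p k x := by
  filter_upwards [(Set.finite_Iio K).eventually_all.2 fun k _ => h k, hK] with x hlt hge k
  exact (lt_or_ge k K).elim (hlt k) (hge k)

theorem TendstoUniformlyOn.uniformEquicontinuousOn {α β : Type*} [UniformSpace α]
    [UniformSpace β] {F : ℕ → α → β} {f : α → β} {S : Set α}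
    (h : TendstoUniformlyOn F f atTop S) (hF : ∀ n, ContinuousOn (F n) S) (hS : IsCompact S) :
    UniformEquicontinuousOn F S := by
  intro U hU
  obtain ⟨V, hV, hVsymm, hVU⟩ := comp_comp_symm_mem_uniformity_sets hU
  have hf : UniformContinuousOn f S :=
    hS.uniformContinuousOn_of_continuous (h.continuousOn (Frequently.of_forall hF))
  obtain ⟨K, hK⟩ := eventually_atTop.1 (h V hV)
  refine eventually_forall_of_eventually_forall_ge
    (fun n => hS.uniformContinuousOn_of_continuous (hF n) hU) K ?_
  filter_upwards [hf hV, mem_inf_of_right (mem_principal_self _)] with xy hxy hmem n hn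
  exact hVU <| SetRel.prodMk_mem_comp
    (SetRel.prodMk_mem_comp (hVsymm.symm _ _ (hK n hn _ hmem.1)) hxy) (hK n hn _ hmem.2)

section DistSums

variable {X : Type*} [PseudoMetricSpace X]

lemma sum_range_dist_comp_le (u : ℕ → X) {ι : ℕ → ℕ} (hι : Monotone ι) (m : ℕ) :
    ∑ j ∈ Finset.range m, dist (u (ι j)) (u (ι (j + 1))) ≤
      ∑ i ∈ Finset.Ico (ι 0) (ι m), dist (u i) (u (i + 1)) := by
  induction m with
  | zero => simp
  | succ m ih =>
    rw [Finset.sum_range_succ,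
      ← Finset.sum_Ico_consecutive _ (hι (Nat.zero_le m)) (hι (Nat.le_succ m))]
    exact add_le_add ih (dist_le_Ico_sum_dist u (hι (Nat.le_succ m)))

lemma sum_range_dist_le_add_of_dist_le (u v : ℕ → X) (n : ℕ) {η : ℝ}
    (h : ∀ j, dist (u j) (v j) ≤ η) :
    ∑ j ∈ Finset.range n, dist (u j) (u (j + 1)) ≤
      ∑ j ∈ Finset.range n, dist (v j) (v (j + 1)) + 2 * n * η := by
  calc ∑ j ∈ Finset.range n, dist (u j) (u (j + 1))
      ≤ ∑ j ∈ Finset.range n, (dist (v j) (v (j + 1)) + 2 * η) := by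
        refine Finset.sum_le_sum fun j _ => ?_
        linarith [dist_triangle4 (u j) (v j) (v (j + 1)) (u (j + 1)), h j, h (j + 1),
          dist_comm (u (j + 1)) (v (j + 1))]
    _ = _ := by
        rw [Finset.sum_add_distrib, Finset.sum_const, Finset.card_range, nsmul_eq_mul]
        ring

end DistSums

namespace IntervalPartition

variable {a b : ℝ} (P : IntervalPartition a b)

lemma nonempty_of_lt (hab : a < b) : Nonempty (IntervalPartition a b) :=
  ⟨{ n := 1
     x := ![a, b]
     mono := Fin.strictMono_iff_lt_succ.2 fun i => by fin_cases i; simpa using hab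
     first := rfl
     last := rfl }⟩

lemma x_mem (i : Fin (P.n + 1)) : P.x i ∈ Set.Icc a b :=
  ⟨P.first.symm.trans_le (P.mono.monotone (Fin.zero_le i)),
    (P.mono.monotone (Fin.le_last i)).trans_eq P.last⟩

lemma mesh_nonneg : 0 ≤ P.mesh :=
  Real.iSup_nonneg fun i => sub_nonneg.2 (P.mono.monotone (Fin.castSucc_le_succ i))

/-- The partition points indexed by `ℕ`, with `P.point i = b` for `i ≥ P.n`. -/
def point (i : ℕ) : ℝ := P.x (Fin.clamp i P.n)

lemma point_val (i : Fin (P.n + 1)) : P.point i = P.x i := by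
  simp [point, Fin.clamp, Nat.min_eq_left (Nat.lt_succ_iff.1 i.isLt)]

lemma point_zero : P.point 0 = a := (P.point_val 0).trans P.first

lemma point_of_le {i : ℕ} (h : P.n ≤ i) : P.point i = b := by
  simp [point, Fin.clamp, Nat.min_eq_right h, ← P.last, Fin.last]

lemma point_mono : Monotone P.point := fun _ _ hij =>
  P.mono.monotone (Fin.mk_le_mk.2 (min_le_min_right _ hij))

lemma point_mem (i : ℕ) : P.point i ∈ Set.Icc a b := P.x_mem _

lemma point_succ_sub_point_le_mesh (i : ℕ) : P.point (i + 1) - P.point i ≤ P.mesh := by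
  rcases lt_or_ge i P.n with h | h
  · have hsucc := P.point_val (⟨i, h⟩ : Fin P.n).succ
    have hcast := P.point_val (⟨i, h⟩ : Fin P.n).castSucc
    rw [Fin.val_succ] at hsucc
    rw [Fin.val_castSucc] at hcast
    rw [hsucc, hcast]
    exact le_ciSup (f := fun j : Fin P.n => P.x j.succ - P.x j.castSucc)
      (Set.finite_range _).bddAbove ⟨i, h⟩
  · rw [P.point_of_le h, P.point_of_le (by omega), sub_self]
    exact P.mesh_nonneg

def floorIndex (x : ℝ) : ℕ := Nat.findGreatest (fun i => P.point i ≤ x) P.n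

lemma floorIndex_le (x : ℝ) : P.floorIndex x ≤ P.n := Nat.findGreatest_le _

lemma floorIndex_mono : Monotone P.floorIndex := fun _ _ hxy =>
  Nat.findGreatest_mono (fun _ hi => hi.trans hxy) le_rfl

lemma point_floorIndex_le {x : ℝ} (hx : a ≤ x) : P.point (P.floorIndex x) ≤ x :=
  Nat.findGreatest_spec (P := fun i => P.point i ≤ x) (Nat.zero_le _) (P.point_zero.trans_le hx)

lemma sub_point_floorIndex_le_mesh {x : ℝ} (hx : x ≤ b) :
    x - P.point (P.floorIndex x) ≤ P.mesh := by
  rcases lt_or_ge (P.floorIndex x) P.n with h | h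
  · have hnext : x < P.point (P.floorIndex x + 1) :=
      not_le.1 (Nat.findGreatest_is_greatest (Nat.lt_succ_self _) h)
    linarith [P.point_succ_sub_point_le_mesh (P.floorIndex x)]
  · rw [P.point_of_le h]
    linarith [P.mesh_nonneg]

end IntervalPartition

section InscribedSum

variable {M : ℕ} {a b : ℝ}

lemma inscribedSum_eq_sum_range_dist (f : ℝ → EuclideanSpace ℝ (Fin M))
    (P : IntervalPartition a b) :
    inscribedSum f P = ∑ i ∈ Finset.range P.n, dist (f (P.point i)) (f (P.point (i + 1))) := by
  rw [inscribedSum,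
    ← Fin.sum_univ_eq_sum_range fun i => dist (f (P.point i)) (f (P.point (i + 1)))]
  refine Finset.sum_congr rfl fun i _ => ?_
  rw [dist_comm, dist_eq_norm, ← P.point_val, ← P.point_val]
  rfl

lemma inscribedSum_le_add_of_dist_le_of_mesh (f : ℝ → EuclideanSpace ℝ (Fin M))
    (P Q : IntervalPartition a b) {ω : ℝ}
    (hf : ∀ s ∈ Set.Icc a b, ∀ t ∈ Set.Icc a b, |s - t| ≤ Q.mesh → dist (f s) (f t) ≤ ω) :
    inscribedSum f P ≤ inscribedSum f Q + 2 * P.n * ω := by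
  set ι : ℕ → ℕ := fun j => Q.floorIndex (P.point j)
  have hι : Monotone ι := Q.floorIndex_mono.comp P.point_mono
  have hclose : ∀ j, dist (f (P.point j)) (f (Q.point (ι j))) ≤ ω := fun j => by
    have hj := P.point_mem j
    refine hf _ hj _ (Q.point_mem _) ?_
    rw [abs_of_nonneg (sub_nonneg.2 (Q.point_floorIndex_le hj.1))]
    exact Q.sub_point_floorIndex_le_mesh hj.2
  have hsub : Finset.Ico (ι 0) (ι P.n) ⊆ Finset.range Q.n :=
    Finset.range_eq_Ico Q.n ▸ Finset.Ico_subset_Ico (Nat.zero_le _) (Q.floorIndex_le _)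
  calc inscribedSum f P
      = ∑ j ∈ Finset.range P.n, dist (f (P.point j)) (f (P.point (j + 1))) :=
        inscribedSum_eq_sum_range_dist f P
    _ ≤ ∑ j ∈ Finset.range P.n, dist (f (Q.point (ι j))) (f (Q.point (ι (j + 1))))
          + 2 * P.n * ω := sum_range_dist_le_add_of_dist_le _ _ _ hclose
    _ ≤ ∑ i ∈ Finset.Ico (ι 0) (ι P.n), dist (f (Q.point i)) (f (Q.point (i + 1)))
          + 2 * P.n * ω := by
        gcongr
        exact sum_range_dist_comp_le (f ∘ Q.point) hι P.n
    _ ≤ ∑ i ∈ Finset.range Q.n, dist (f (Q.point i)) (f (Q.point (i + 1)))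
          + 2 * P.n * ω := by
        gcongr
    _ = inscribedSum f Q + 2 * P.n * ω := by rw [inscribedSum_eq_sum_range_dist]

lemma tendsto_inscribedSum {ι : Type*} {l : Filter ι} {F : ι → ℝ → EuclideanSpace ℝ (Fin M)}
    {f : ℝ → EuclideanSpace ℝ (Fin M)}
    (h : ∀ x ∈ Set.Icc a b, Tendsto (fun k => F k x) l (nhds (f x))) (P : IntervalPartition a b) :
    Tendsto (fun k => inscribedSum (F k) P) l (nhds (inscribedSum f P)) :=
  tendsto_finsetSum _ fun _ _ =>
    ((h _ (P.x_mem _)).sub (h _ (P.x_mem _))).norm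

lemma exists_inscribedSum_gt (hab : a < b) (f : ℝ → EuclideanSpace ℝ (Fin M)) {c : ℝ}
    (hc : c < (curveLength f a b).toReal) : ∃ P : IntervalPartition a b, c < inscribedSum f P := by
  have := IntervalPartition.nonempty_of_lt hab
  refine exists_lt_of_lt_ciSup (hc.trans_eq ?_)
  rw [curveLength, ENNReal.toReal_iSup fun _ => ENNReal.ofReal_ne_top]
  exact iSup_congr fun P =>
    ENNReal.toReal_ofReal (Finset.sum_nonneg fun _ _ => norm_nonneg _)

lemma exists_forall_exists_inscribedSum_gt (hab : a < b) {f₀ : ℝ → EuclideanSpace ℝ (Fin M)}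
    {fk : ℕ → ℝ → EuclideanSpace ℝ (Fin M)}
    (hconv : ∀ x ∈ Set.Icc a b, Tendsto (fun k => fk k x) atTop (nhds (f₀ x)))
    (hlen : Tendsto (fun k => (curveLength (fk k) a b).toReal) atTop
      (nhds (curveLength f₀ a b).toReal)) {ε : ℝ} (hε : 0 < ε) :
    ∃ N : ℕ, ∀ k, ∃ P : IntervalPartition a b,
      P.n ≤ N ∧ (curveLength (fk k) a b).toReal - ε < inscribedSum (fk k) P := by
  obtain ⟨P₀, hP₀⟩ := exists_inscribedSum_gt hab f₀ (sub_lt_self _ (half_pos hε))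
  have htail : ∀ᶠ k in atTop, (curveLength (fk k) a b).toReal - inscribedSum (fk k) P₀ < ε :=
    (hlen.sub (tendsto_inscribedSum hconv P₀)).eventually (gt_mem_nhds (by linarith))
  obtain ⟨K, hK⟩ := eventually_atTop.1 htail
  refine (eventually_forall_of_eventually_forall_ge (fun k => ?_) K
    ((eventually_ge_atTop P₀.n).mono fun N hN k hk => ⟨P₀, hN, by linarith [hK k hk]⟩)).exists
  obtain ⟨P, hP⟩ := exists_inscribedSum_gt hab (fk k) (sub_lt_self _ hε)
  exact (eventually_ge_atTop P.n).mono fun N hN => ⟨P, hN, hP⟩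

end InscribedSum

theorem inscribedSum_tendsto_length_uniformly_general {M : ℕ} (a b : ℝ) (hab : a < b)
    (f₀ : ℝ → EuclideanSpace ℝ (Fin M)) (fk : ℕ → ℝ → EuclideanSpace ℝ (Fin M))
    (hck : ∀ k, ContinuousOn (fk k) (Set.Icc a b))
    (hunif : TendstoUniformlyOn fk f₀ atTop (Set.Icc a b))
    (hlen : Tendsto (fun k => (curveLength (fk k) a b).toReal) atTop
      (nhds (curveLength f₀ a b).toReal)) :
    ∀ ε > (0 : ℝ), ∃ δ > (0 : ℝ), ∀ k : ℕ, ∀ Q : IntervalPartition a b, Q.mesh < δ →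
      (curveLength (fk k) a b).toReal - inscribedSum (fk k) Q < ε := by
  intro ε hε
  obtain ⟨N, hN⟩ :=
    exists_forall_exists_inscribedSum_gt hab (fun _ hx => hunif.tendsto_at hx) hlen (half_pos hε)
  set ω := ε / (4 * (N + 1))
  obtain ⟨δ, hδ, hequi⟩ :=
    ((Metric.uniformity_basis_dist.inf_principal _).uniformEquicontinuousOn_iff
      Metric.uniformity_basis_dist).1 (hunif.uniformEquicontinuousOn hck isCompact_Icc) ω
      (by positivity)
  refine ⟨δ, hδ, fun k Q hQ => ?_⟩
  obtain ⟨P, hPN, hP⟩ := hN k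
  have hPQ := inscribedSum_le_add_of_dist_le_of_mesh (fk k) P Q fun s hs t ht hst =>
    (hequi s t ⟨hst.trans_lt hQ, hs, ht⟩ k).le
  have hω : 2 * P.n * ω ≤ ε / 2 := by
    calc 2 * P.n * ω ≤ 2 * (N + 1) * ω := by gcongr; exact_mod_cast hPN.trans N.le_succ
      _ = ε / 2 := by simp only [ω]; field_simp; ring
  linarith

/-- If continuous rectifiable curves `C_k ↔ f_k` converge uniformly on `[a,b]`
to the continuous rectifiable curve `C₀ ↔ f₀` with `ℓ(C_k) → ℓ(C₀)`, then the inscribed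
sums converge to the lengths uniformly in `k`: for every `ε > 0` there is `δ > 0` such that
`ℓ(C_k) − V(f_k;Q) < ε` for every `k` and every partition `Q` of mesh `< δ`. -/
theorem inscribedSum_tendsto_length_uniformly {M : ℕ} (a b : ℝ) (hab : a < b)
    (f₀ : ℝ → EuclideanSpace ℝ (Fin M)) (fk : ℕ → ℝ → EuclideanSpace ℝ (Fin M))
    (hc0 : ContinuousOn f₀ (Set.Icc a b)) (hr0 : curveLength f₀ a b < ⊤)
    (hck : ∀ k, ContinuousOn (fk k) (Set.Icc a b))
    (hrk : ∀ k, curveLength (fk k) a b < ⊤)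
    (hunif : TendstoUniformlyOn fk f₀ atTop (Set.Icc a b))
    (hlen : Tendsto (fun k => (curveLength (fk k) a b).toReal) atTop
      (nhds (curveLength f₀ a b).toReal)) :
    ∀ ε > (0 : ℝ), ∃ δ > (0 : ℝ), ∀ k : ℕ, ∀ Q : IntervalPartition a b, Q.mesh < δ →
      (curveLength (fk k) a b).toReal - inscribedSum (fk k) Q < ε :=
  inscribedSum_tendsto_length_uniformly_general a b hab f₀ fk hck hunif hlen
end
end

section
/- Let C ↔ f : [a,b] → ℝ^M (a < b) be a continuous and rectifiable curve and let F be a parametric integrand (a continuous function F : ℝ^M × ℝ^M → ℝ with F(x, K·t) = K·F(x,t) for all K ≥ 0). Then the line integral of F along C exists: there is a real number L such that for every ε > 0 there exists δ > 0 such that for every partition a = x₀ < x₁ < ⋯ < xₙ = b with mesh < δ and every choice of tags ξᵢ ∈ [xᵢ₋₁, xᵢ], |Σᵢ₌₁ⁿ F(f(ξᵢ), f(xᵢ) − f(xᵢ₋₁)) − L| < ε. -/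
open scoped BigOperators ENNReal
open MeasureTheory Filter

noncomputable section

/-
Homogeneity and uniform continuity of `F` on the compact set `f([a,b]) × (unit ball)` give a
constant `D` such that, for vectors `tⱼ` with sum `u` and points `yⱼ` of the curve close to `x`,
`|Σⱼ F(yⱼ, tⱼ) − F(x, u)| ≤ ε Σⱼ ‖tⱼ‖ + D (Σⱼ ‖tⱼ‖ − ‖u‖)`: each `tⱼ` is compared with its
projection `⟪tⱼ, v⟫ v` onto the direction `v` of `u`. Applied block by block to a refinement `R`
of a partition `P`, this bounds the difference of their Riemann sums by
`ε ℓ(C) + D (V(f;R) − V(f;P))`, and `V(f;R) − V(f;P) ≤ ℓ(C) − V(f;P)` is small once the mesh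
of `P` is small, because the inscribed sums tend to `ℓ(C) < ∞` as the mesh tends to `0`. Comparing two fine
partitions through a common refinement, the Riemann sums are Cauchy as the mesh tends to `0`,
hence converge.
-/

section NormedSpace

variable {E : Type*} [NormedAddCommGroup E] [NormedSpace ℝ E] {G : E → ℝ}

theorem norm_smul_inv_norm_smul (t : E) : ‖t‖ • (‖t‖⁻¹ • t) = t := by
  rcases eq_or_ne t 0 with rfl | ht
  · simp
  · rw [smul_smul, mul_inv_cancel₀ (norm_ne_zero_iff.mpr ht), one_smul]

theorem norm_inv_norm_smul_le_one (t : E) : ‖‖t‖⁻¹ • t‖ ≤ 1 := by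
  rw [norm_smul, norm_inv, norm_norm]
  exact inv_mul_le_one_of_le₀ le_rfl (norm_nonneg t)

theorem apply_eq_norm_mul_apply_inv_norm_smul (hom : ∀ K : ℝ, 0 ≤ K → ∀ t, G (K • t) = K * G t)
    (t : E) : G t = ‖t‖ * G (‖t‖⁻¹ • t) := by
  conv_lhs => rw [← norm_smul_inv_norm_smul t]
  exact hom _ (norm_nonneg t) _

theorem abs_sub_le_mul_norm_of_norm_sub_lt (hom : ∀ K : ℝ, 0 ≤ K → ∀ t, G (K • t) = K * G t)
    {ε r : ℝ}
    (hmod : ∀ s s' : E, ‖s‖ ≤ 1 → ‖s'‖ ≤ 1 → ‖s - s'‖ < r → |G s - G s'| ≤ ε)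
    {t w : E} (hw : ‖w‖ ≤ ‖t‖) (htw : ‖t - w‖ < r * ‖t‖) : |G t - G w| ≤ ε * ‖t‖ := by
  have ht : 0 < ‖t‖ := by
    by_contra! h
    rw [le_antisymm h (norm_nonneg t), mul_zero] at htw
    exact (norm_nonneg _).not_gt htw
  have hk : 0 < ‖t‖⁻¹ := inv_pos.mpr ht
  have key := hmod (‖t‖⁻¹ • t) (‖t‖⁻¹ • w) (norm_inv_norm_smul_le_one t)
    (by rw [norm_smul, Real.norm_of_nonneg hk.le]; exact inv_mul_le_one_of_le₀ hw ht.le)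
    (by rw [← smul_sub, norm_smul, Real.norm_of_nonneg hk.le, inv_mul_lt_iff₀ ht]; linarith)
  rw [hom _ hk.le, hom _ hk.le, ← mul_sub, abs_mul, abs_of_pos hk, inv_mul_le_iff₀ ht] at key
  linarith

end NormedSpace

section InnerProductSpace

variable {E : Type*} [NormedAddCommGroup E] [InnerProductSpace ℝ E] {G : E → ℝ} {C ε r θ : ℝ}

theorem abs_sub_inner_mul_le (hom : ∀ K : ℝ, 0 ≤ K → ∀ t, G (K • t) = K * G t)
    (hbound : ∀ t, |G t| ≤ C * ‖t‖)
    (hmod : ∀ s s' : E, ‖s‖ ≤ 1 → ‖s'‖ ≤ 1 → ‖s - s'‖ < r → |G s - G s'| ≤ ε)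
    (hC : 0 ≤ C) (hε : 0 ≤ ε) (hr : 0 ≤ r) (hθ : 0 < θ) (hθ1 : θ ≤ 1) (hθr : 2 * θ ≤ r ^ 2)
    {v : E} (hv : ‖v‖ ≤ 1) (t : E) :
    |G t - inner ℝ t v * G v| ≤ ε * ‖t‖ + 2 * C / θ * (‖t‖ - inner ℝ t v) := by
  set p := inner ℝ t v
  have hpt : |p| ≤ ‖t‖ :=
    (abs_real_inner_le_norm t v).trans (mul_le_of_le_one_right (norm_nonneg t) hv)
  have hp : p ≤ ‖t‖ := (le_abs_self p).trans hpt
  have hD : 0 ≤ 2 * C / θ * (‖t‖ - p) := mul_nonneg (by positivity) (sub_nonneg.mpr hp)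
  -- Either `t` is far from the ray through `v` and `|G| ≤ C ‖·‖` suffices, or `t` is close to
  -- `p • v` relative to `‖t‖` and the modulus of `G` applies.
  rcases le_or_gt (θ * ‖t‖) (‖t‖ - p) with hfar | hclose
  · have h1 : |G t - p * G v| ≤ 2 * C * ‖t‖ := by
      calc |G t - p * G v| ≤ |G t| + |p| * |G v| := by rw [← abs_mul]; exact abs_sub _ _
        _ ≤ C * ‖t‖ + ‖t‖ * C := by
          gcongr
          · exact hbound t
          · exact (hbound v).trans (mul_le_of_le_one_right hC hv)
        _ = 2 * C * ‖t‖ := by ring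
    have h2 : 2 * C * ‖t‖ ≤ 2 * C / θ * (‖t‖ - p) := by
      rw [div_mul_eq_mul_div, le_div_iff₀ hθ]; nlinarith
    nlinarith [norm_nonneg t]
  · have hp0 : 0 < p := by nlinarith [norm_nonneg t]
    have hw : ‖p • v‖ ≤ ‖t‖ := by
      rw [norm_smul, Real.norm_of_nonneg hp0.le]; exact mul_le_of_le_one_right hp0.le hv |>.trans hp
    -- `‖t - p • v‖² ≤ ‖t‖² - p² ≤ 2 ‖t‖ (‖t‖ - p) < 2 θ ‖t‖² ≤ (r ‖t‖)²`
    have hsq : ‖t - p • v‖ ^ 2 < (r * ‖t‖) ^ 2 := by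
      have : ‖t - p • v‖ ^ 2 = ‖t‖ ^ 2 - 2 * p * p + p ^ 2 * ‖v‖ ^ 2 := by
        rw [norm_sub_sq_real, real_inner_smul_right, norm_smul, Real.norm_of_nonneg hp0.le]; ring
      have hv2 : ‖v‖ ^ 2 ≤ 1 := pow_le_one₀ (norm_nonneg v) hv
      nlinarith [norm_nonneg t, mul_le_mul_of_nonneg_left hv2 (sq_nonneg p)]
    have h := abs_sub_le_mul_norm_of_norm_sub_lt hom hmod hw
      (lt_of_pow_lt_pow_left₀ 2 (by positivity) hsq)
    rw [hom p hp0.le] at h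
    linarith

theorem abs_sum_sub_apply_sum_le (hom : ∀ K : ℝ, 0 ≤ K → ∀ t, G (K • t) = K * G t)
    (hbound : ∀ t, |G t| ≤ C * ‖t‖)
    (hmod : ∀ s s' : E, ‖s‖ ≤ 1 → ‖s'‖ ≤ 1 → ‖s - s'‖ < r → |G s - G s'| ≤ ε)
    (hC : 0 ≤ C) (hε : 0 ≤ ε) (hr : 0 ≤ r) (hθ : 0 < θ) (hθ1 : θ ≤ 1) (hθr : 2 * θ ≤ r ^ 2)
    {ι : Type*} (s : Finset ι) (t : ι → E) :
    |∑ j ∈ s, G (t j) - G (∑ j ∈ s, t j)|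
      ≤ ε * ∑ j ∈ s, ‖t j‖ + 2 * C / θ * (∑ j ∈ s, ‖t j‖ - ‖∑ j ∈ s, t j‖) := by
  set u := ∑ j ∈ s, t j
  set v := ‖u‖⁻¹ • u
  have hinner : ∑ j ∈ s, inner ℝ (t j) v = ‖u‖ := by
    rw [← sum_inner, real_inner_smul_right, real_inner_self_eq_norm_sq, inv_mul_eq_div, sq,
      mul_self_div_self]
  have hGu : G u = ‖u‖ * G v := apply_eq_norm_mul_apply_inv_norm_smul hom u
  have hsplit : ∑ j ∈ s, G (t j) - G u = ∑ j ∈ s, (G (t j) - inner ℝ (t j) v * G v) := by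
    rw [Finset.sum_sub_distrib, ← Finset.sum_mul, hinner, hGu]
  calc |∑ j ∈ s, G (t j) - G u| ≤ ∑ j ∈ s, |G (t j) - inner ℝ (t j) v * G v| := by
        rw [hsplit]; exact Finset.abs_sum_le_sum_abs _ _
    _ ≤ ∑ j ∈ s, (ε * ‖t j‖ + 2 * C / θ * (‖t j‖ - inner ℝ (t j) v)) :=
        Finset.sum_le_sum fun j _ => abs_sub_inner_mul_le hom hbound hmod hC hε hr hθ hθ1 hθr
          (norm_inv_norm_smul_le_one u) (t j)
    _ = ε * ∑ j ∈ s, ‖t j‖ + 2 * C / θ * (∑ j ∈ s, ‖t j‖ - ‖u‖) := by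
        rw [Finset.sum_add_distrib, ← Finset.mul_sum, ← Finset.mul_sum, Finset.sum_sub_distrib,
          hinner]

end InnerProductSpace

section ProperSpace

variable {E : Type*} [NormedAddCommGroup E] [NormedSpace ℝ E] [ProperSpace E] {F : E → E → ℝ}
  {K : Set E}

theorem exists_abs_le_mul_norm_of_homogeneous (hF : Continuous (Function.uncurry F))
    (hom : ∀ L : ℝ, 0 ≤ L → ∀ x t, F x (L • t) = L * F x t) (hK : IsCompact K) :
    ∃ C, 0 ≤ C ∧ ∀ x ∈ K, ∀ t, |F x t| ≤ C * ‖t‖ := by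
  obtain ⟨C, hC⟩ :=
    (hK.prod (isCompact_closedBall (0 : E) 1)).exists_bound_of_continuousOn hF.continuousOn
  refine ⟨max C 0, le_max_right _ _, fun x hx t => ?_⟩
  rw [apply_eq_norm_mul_apply_inv_norm_smul (hom · · x) t, abs_mul, abs_norm, mul_comm]
  gcongr
  exact (hC (x, _) ⟨hx, by simpa using norm_inv_norm_smul_le_one t⟩).trans (le_max_left _ _)

theorem exists_modulus_of_homogeneous (hF : Continuous (Function.uncurry F))
    (hom : ∀ L : ℝ, 0 ≤ L → ∀ x t, F x (L • t) = L * F x t) (hK : IsCompact K)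
    {ε : ℝ} (hε : 0 < ε) :
    ∃ r > 0, (∀ x ∈ K, ∀ y ∈ K, ‖x - y‖ < r → ∀ t, |F x t - F y t| ≤ ε * ‖t‖) ∧
      ∀ x ∈ K, ∀ s s' : E, ‖s‖ ≤ 1 → ‖s'‖ ≤ 1 → ‖s - s'‖ < r → |F x s - F x s'| ≤ ε := by
  obtain ⟨r, hr, hUC⟩ := Metric.uniformContinuousOn_iff_le.mp
    ((hK.prod (isCompact_closedBall (0 : E) 1)).uniformContinuousOn_of_continuous
      hF.continuousOn) ε hε
  have hball : ∀ s : E, ‖s‖ ≤ 1 → s ∈ Metric.closedBall (0 : E) 1 := by simp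
  refine ⟨r, hr, fun x hx y hy hxy t => ?_, fun x hx s s' hs hs' hss' => ?_⟩
  · rw [apply_eq_norm_mul_apply_inv_norm_smul (hom · · x) t,
      apply_eq_norm_mul_apply_inv_norm_smul (hom · · y) t, ← mul_sub, abs_mul, abs_norm, mul_comm]
    gcongr
    refine hUC (x, _) ⟨hx, hball _ (norm_inv_norm_smul_le_one t)⟩
      (y, _) ⟨hy, hball _ (norm_inv_norm_smul_le_one t)⟩ ?_
    simpa [Prod.dist_eq, dist_eq_norm] using hxy.le
  · refine hUC (x, s) ⟨hx, hball s hs⟩ (x, s') ⟨hx, hball s' hs'⟩ ?_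
    simpa [Prod.dist_eq, dist_eq_norm] using hss'.le

end ProperSpace

theorem exists_abs_sum_sub_le_of_homogeneous {E : Type*} [NormedAddCommGroup E]
    [InnerProductSpace ℝ E] [ProperSpace E] {F : E → E → ℝ} {K : Set E}
    (hF : Continuous (Function.uncurry F))
    (hom : ∀ L : ℝ, 0 ≤ L → ∀ x t, F x (L • t) = L * F x t) (hK : IsCompact K)
    {ε : ℝ} (hε : 0 < ε) {ι : Type*} :
    ∃ r > 0, ∃ D ≥ 0, ∀ x ∈ K, ∀ (s : Finset ι) (y t : ι → E),
      (∀ j ∈ s, y j ∈ K ∧ ‖y j - x‖ < r) →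
      |∑ j ∈ s, F (y j) (t j) - F x (∑ j ∈ s, t j)|
        ≤ ε * ∑ j ∈ s, ‖t j‖ + D * (∑ j ∈ s, ‖t j‖ - ‖∑ j ∈ s, t j‖) := by
  obtain ⟨C, hC, hbound⟩ := exists_abs_le_mul_norm_of_homogeneous hF hom hK
  obtain ⟨r, hr, hmod₁, hmod₂⟩ := exists_modulus_of_homogeneous hF hom hK (half_pos hε)
  set θ := min 1 (r ^ 2 / 2)
  have hθ : 0 < θ := lt_min one_pos (by positivity)
  refine ⟨r, hr, 2 * C / θ, by positivity, fun x hx s y t hy => ?_⟩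
  have hblock := abs_sum_sub_apply_sum_le (fun L hL t => hom L hL x t) (hbound x hx)
    (hmod₂ x hx) hC (half_pos hε).le hr.le hθ (min_le_left _ _)
    (by linarith [min_le_right 1 (r ^ 2 / 2)]) s t
  have htags : |∑ j ∈ s, F (y j) (t j) - ∑ j ∈ s, F x (t j)| ≤ ε / 2 * ∑ j ∈ s, ‖t j‖ := by
    rw [← Finset.sum_sub_distrib, Finset.mul_sum]
    exact (Finset.abs_sum_le_sum_abs _ _).trans
      (Finset.sum_le_sum fun j hj => hmod₁ _ (hy j hj).1 x hx (hy j hj).2 _)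
  calc _ ≤ |∑ j ∈ s, F (y j) (t j) - ∑ j ∈ s, F x (t j)|
        + |∑ j ∈ s, F x (t j) - F x (∑ j ∈ s, t j)| := abs_sub_le _ _ _
    _ ≤ _ := by linarith

theorem Finset.sum_norm_le_norm_sum_add {E : Type*} [SeminormedAddCommGroup E] {ι : Type*}
    {s : Finset ι} (hs : s.Nonempty) {t : ι → E} {η : ℝ} (ht : ∀ j ∈ s, ‖t j‖ ≤ η) :
    ∑ j ∈ s, ‖t j‖ ≤ ‖∑ j ∈ s, t j‖ + 2 * η * (s.card - 1) := by
  obtain ⟨j, rfl⟩ | hs := hs.exists_eq_singleton_or_nontrivial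
  · simp
  · have hη : 0 ≤ η := (norm_nonneg _).trans (ht _ hs.nonempty.choose_spec)
    have hcard : (2 : ℝ) ≤ s.card := by exact_mod_cast Finset.one_lt_card_iff_nontrivial.mpr hs
    calc ∑ j ∈ s, ‖t j‖ ≤ s.card • η := Finset.sum_le_card_nsmul _ _ _ ht
      _ ≤ 2 * η * (s.card - 1) := by rw [nsmul_eq_mul]; nlinarith
      _ ≤ _ := le_add_of_nonneg_left (norm_nonneg _)

theorem exists_forall_abs_sub_lt_of_cauchy {ι : Type*} (S m : ι → ℝ)
    (hm : ∀ δ > 0, ∃ i, m i < δ)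
    (hS : ∀ ε > 0, ∃ δ > 0, ∀ i j, m i < δ → m j < δ → |S i - S j| ≤ ε) :
    ∃ L, ∀ ε > 0, ∃ δ > 0, ∀ i, m i < δ → |S i - L| < ε := by
  choose i hi using fun k : ℕ => hm (1 / (k + 1)) Nat.one_div_pos_of_nat
  have hsmall : ∀ δ > 0, ∃ N : ℕ, ∀ k ≥ N, m (i k) < δ := by
    intro δ hδ
    obtain ⟨N, hN⟩ := exists_nat_one_div_lt hδ
    exact ⟨N, fun k hk => (hi k).trans_le
      ((Nat.one_div_le_one_div hk).trans hN.le)⟩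
  have hcauchy : CauchySeq (S ∘ i) := by
    refine Metric.cauchySeq_iff'.mpr fun ε hε => ?_
    obtain ⟨δ, hδ, hSδ⟩ := hS (ε / 2) (half_pos hε)
    obtain ⟨N, hN⟩ := hsmall δ hδ
    exact ⟨N, fun k hk => (hSδ _ _ (hN k hk) (hN N le_rfl)).trans_lt (half_lt_self hε)⟩
  obtain ⟨L, hL⟩ := cauchySeq_tendsto_of_complete hcauchy
  refine ⟨L, fun ε hε => ?_⟩
  obtain ⟨δ, hδ, hSδ⟩ := hS (ε / 2) (half_pos hε)
  obtain ⟨N₁, hN₁⟩ := hsmall δ hδ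
  obtain ⟨N₂, hN₂⟩ := Metric.tendsto_atTop.mp hL (ε / 2) (half_pos hε)
  refine ⟨δ, hδ, fun j hj => ?_⟩
  have h₁ := hSδ j _ hj (hN₁ _ (le_max_left N₁ N₂))
  have h₂ : |S (i (max N₁ N₂)) - L| < ε / 2 := by
    simpa [Real.dist_eq] using hN₂ _ (le_max_right N₁ N₂)
  calc |S j - L| ≤ |S j - S (i (max N₁ N₂))| + |S (i (max N₁ N₂)) - L| := abs_sub_le _ _ _
    _ < ε := by linarith

namespace IntervalPartition

variable {a b : ℝ} (P : IntervalPartition a b)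

def pt (k : ℕ) : ℝ := P.x ⟨min k P.n, Nat.lt_succ_of_le (min_le_right k P.n)⟩

theorem pt_val (i : Fin (P.n + 1)) : P.pt i = P.x i := by
  simp only [pt, min_eq_left (Nat.lt_succ_iff.mp i.isLt)]

theorem pt_zero : P.pt 0 = a := by simpa using P.pt_val 0 ▸ P.first

theorem pt_n : P.pt P.n = b := by simpa using P.pt_val (Fin.last P.n) ▸ P.last

theorem pt_monotone : Monotone P.pt := fun _ _ h =>
  P.mono.monotone (Fin.mk_le_mk.mpr (min_le_min_right _ h))

theorem pt_strictMonoOn : StrictMonoOn P.pt (Set.Iic P.n) := fun j hj k hk h => by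
  simp only [pt, min_eq_left (Set.mem_Iic.mp hj), min_eq_left (Set.mem_Iic.mp hk)]
  exact P.mono (Fin.mk_lt_mk.mpr h)

theorem pt_mem_Icc (k : ℕ) : P.pt k ∈ Set.Icc a b := by
  refine ⟨?_, ?_⟩
  · simpa only [P.pt_zero] using P.pt_monotone k.zero_le
  · exact (P.mono.monotone (Fin.le_last _)).trans_eq P.last

theorem pt_succ_sub_pt_le_mesh {k : ℕ} (hk : k < P.n) : P.pt (k + 1) - P.pt k ≤ P.mesh := by
  have := le_ciSup (Set.finite_range fun i : Fin P.n => P.x i.succ - P.x i.castSucc).bddAbove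
    ⟨k, hk⟩
  rwa [← P.pt_val, ← P.pt_val] at this

theorem dist_le_mesh {k : ℕ} (hk : k < P.n) {s t : ℝ} (hs : s ∈ Set.Icc (P.pt k) (P.pt (k + 1)))
    (ht : t ∈ Set.Icc (P.pt k) (P.pt (k + 1))) : dist s t ≤ P.mesh :=
  (Real.dist_le_of_mem_Icc hs ht).trans (P.pt_succ_sub_pt_le_mesh hk)

def points : Finset ℝ := Finset.univ.image P.x

theorem pt_mem_points (k : ℕ) : P.pt k ∈ P.points :=
  Finset.mem_image_of_mem _ (Finset.mem_univ _)

theorem left_mem_points : a ∈ P.points := by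
  simpa only [P.pt_zero] using P.pt_mem_points 0

theorem right_mem_points : b ∈ P.points := by
  simpa only [P.pt_n] using P.pt_mem_points P.n

theorem exists_pt_eq_of_mem_points {t : ℝ} (ht : t ∈ P.points) : ∃ k ≤ P.n, P.pt k = t := by
  obtain ⟨i, -, rfl⟩ := Finset.mem_image.mp ht
  exact ⟨i, Nat.lt_succ_iff.mp i.isLt, P.pt_val i⟩

theorem card_points : P.points.card = P.n + 1 := by
  rw [points, Finset.card_image_of_injective _ P.mono.injective, Finset.card_univ,
    Fintype.card_fin]

def ofFinset (S : Finset ℝ) (ha : a ∈ S) (hb : b ∈ S) (hS : ∀ t ∈ S, t ∈ Set.Icc a b) :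
    IntervalPartition a b where
  n := S.card - 1
  x := S.orderEmbOfFin (Nat.succ_pred_eq_of_pos (Finset.card_pos.mpr ⟨a, ha⟩)).symm
  mono := (S.orderEmbOfFin _).strictMono
  first := (S.orderEmbOfFin_zero _ (Nat.succ_pos _)).trans
    (le_antisymm (S.min'_le a ha) (S.le_min' _ a fun t ht => (hS t ht).1))
  last := (S.orderEmbOfFin_last _ (Nat.succ_pos _)).trans
    (le_antisymm (S.max'_le _ b fun t ht => (hS t ht).2) (S.le_max' b hb))

theorem points_ofFinset (S : Finset ℝ) (ha : a ∈ S) (hb : b ∈ S)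
    (hS : ∀ t ∈ S, t ∈ Set.Icc a b) : (ofFinset S ha hb hS).points = S :=
  Finset.image_orderEmbOfFin_univ S _

theorem exists_common_refinement (P Q : IntervalPartition a b) :
    ∃ R : IntervalPartition a b, P.points ⊆ R.points ∧ Q.points ⊆ R.points ∧
      R.n ≤ P.n + Q.n + 1 := by
  have hmem : ∀ t ∈ P.points ∪ Q.points, t ∈ Set.Icc a b := by
    intro t ht
    obtain ⟨R, hR⟩ : ∃ R : IntervalPartition a b, t ∈ R.points := by
      rcases Finset.mem_union.mp ht with h | h
      exacts [⟨P, h⟩, ⟨Q, h⟩]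
    obtain ⟨k, -, rfl⟩ := R.exists_pt_eq_of_mem_points hR
    exact R.pt_mem_Icc k
  have ha : a ∈ P.points ∪ Q.points := Finset.mem_union_left _ P.left_mem_points
  have hb : b ∈ P.points ∪ Q.points := Finset.mem_union_left _ P.right_mem_points
  refine ⟨ofFinset _ ha hb hmem, ?_, ?_, ?_⟩
  · rw [points_ofFinset]; exact Finset.subset_union_left
  · rw [points_ofFinset]; exact Finset.subset_union_right
  · have := Finset.card_union_le P.points Q.points
    rw [P.card_points, Q.card_points] at this
    show (P.points ∪ Q.points).card - 1 ≤ _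
    omega

def uniform (hab : a < b) (k : ℕ) : IntervalPartition a b where
  n := k + 1
  x i := a + i * ((b - a) / (k + 1))
  mono i j hij := by
    have : 0 < (b - a) / (k + 1) := div_pos (sub_pos.mpr hab) k.cast_add_one_pos
    simp only
    gcongr
    exact_mod_cast hij
  first := by simp
  last := by
    simp only [Fin.val_last, Nat.cast_add, Nat.cast_one]
    field_simp
    ring

theorem mesh_uniform (hab : a < b) (k : ℕ) : (uniform hab k).mesh = (b - a) / (k + 1) := by
  simp only [mesh, uniform, Fin.val_succ, Fin.val_castSucc, Nat.cast_add, Nat.cast_one]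
  simp only [add_sub_add_left_eq_sub, ← sub_mul, add_sub_cancel_left, one_mul, ciSup_const]

theorem exists_mesh_lt (hab : a < b) {δ : ℝ} (hδ : 0 < δ) :
    ∃ P : IntervalPartition a b, P.mesh < δ := by
  obtain ⟨k, hk⟩ := exists_nat_one_div_lt (div_pos hδ (sub_pos.mpr hab))
  refine ⟨uniform hab k, ?_⟩
  rw [mesh_uniform, div_eq_mul_one_div]
  rwa [lt_div_iff₀' (sub_pos.mpr hab)] at hk

def incr {E : Type*} [Sub E] (P : IntervalPartition a b) (f : ℝ → E) (k : ℕ) : E :=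
  f (P.pt (k + 1)) - f (P.pt k)

structure IsRefinementMap (P R : IntervalPartition a b) (idx : ℕ → ℕ) : Prop where
  zero : idx 0 = 0
  last : idx P.n = R.n
  lt_succ : ∀ i < P.n, idx i < idx (i + 1)
  le : ∀ i, idx i ≤ R.n
  pt_idx : ∀ i, R.pt (idx i) = P.pt i

theorem exists_isRefinementMap {P R : IntervalPartition a b} (h : P.points ⊆ R.points) :
    ∃ idx, IsRefinementMap P R idx := by
  choose idx hle hpt using fun i => R.exists_pt_eq_of_mem_points (h (P.pt_mem_points i))
  have hinj := R.pt_strictMonoOn.injOn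
  refine ⟨idx, ⟨?_, ?_, fun i hi => ?_, hle, hpt⟩⟩
  · exact hinj (hle 0) (Nat.zero_le _) (by rw [hpt, P.pt_zero, R.pt_zero])
  · exact hinj (hle P.n) Set.self_mem_Iic (by rw [hpt, P.pt_n, R.pt_n])
  · rw [← R.pt_strictMonoOn.lt_iff_lt (hle i) (hle (i + 1)), hpt, hpt]
    exact P.pt_strictMonoOn (Set.mem_Iic.mpr hi.le) (Set.mem_Iic.mpr hi) (Nat.lt_succ_self i)

namespace IsRefinementMap

variable {P} {R : IntervalPartition a b} {idx : ℕ → ℕ} (hidx : IsRefinementMap P R idx)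
include hidx

theorem sum_blocks {M : Type*} [AddCommMonoid M] (g : ℕ → M) :
    ∑ i ∈ Finset.range P.n, ∑ j ∈ Finset.Ico (idx i) (idx (i + 1)), g j
      = ∑ j ∈ Finset.range R.n, g j := by
  have h : ∀ m ≤ P.n, ∑ i ∈ Finset.range m, ∑ j ∈ Finset.Ico (idx i) (idx (i + 1)), g j
      = ∑ j ∈ Finset.range (idx m), g j := by
    intro m hm
    induction m with
    | zero => simp [hidx.zero]
    | succ m ih =>
      rw [Finset.sum_range_succ, ih (by omega),
        Finset.sum_range_add_sum_Ico _ (hidx.lt_succ m (by omega)).le]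
  rw [h P.n le_rfl, hidx.last]

theorem sum_incr {E : Type*} [AddCommGroup E] (f : ℝ → E) {i : ℕ} (hi : i < P.n) :
    ∑ j ∈ Finset.Ico (idx i) (idx (i + 1)), R.incr f j = P.incr f i := by
  simp only [incr]
  rw [Finset.sum_Ico_sub (fun j => f (R.pt j)) (hidx.lt_succ i hi).le, hidx.pt_idx, hidx.pt_idx]

theorem Icc_subset {i j : ℕ} (hj : j ∈ Finset.Ico (idx i) (idx (i + 1))) :
    Set.Icc (R.pt j) (R.pt (j + 1)) ⊆ Set.Icc (P.pt i) (P.pt (i + 1)) := by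
  obtain ⟨hj₁, hj₂⟩ := Finset.mem_Ico.mp hj
  rw [← hidx.pt_idx, ← hidx.pt_idx]
  exact Set.Icc_subset_Icc (R.pt_monotone hj₁) (R.pt_monotone hj₂)

end IsRefinementMap

end IntervalPartition

section Curve

open IntervalPartition

variable {M : ℕ} {a b : ℝ} (f : ℝ → EuclideanSpace ℝ (Fin M))

theorem inscribedSum_nonneg (P : IntervalPartition a b) : 0 ≤ inscribedSum f P :=
  Finset.sum_nonneg fun _ _ => norm_nonneg _

theorem inscribedSum_eq_sum_range (P : IntervalPartition a b) :
    inscribedSum f P = ∑ k ∈ Finset.range P.n, ‖P.incr f k‖ := by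
  rw [inscribedSum, ← Fin.sum_univ_eq_sum_range (fun k => ‖P.incr f k‖)]
  simp only [incr, ← P.pt_val, Fin.val_succ, Fin.val_castSucc]

theorem inscribedSum_mono {P R : IntervalPartition a b} (h : P.points ⊆ R.points) :
    inscribedSum f P ≤ inscribedSum f R := by
  obtain ⟨idx, hidx⟩ := exists_isRefinementMap h
  rw [inscribedSum_eq_sum_range, inscribedSum_eq_sum_range, ← hidx.sum_blocks]
  refine Finset.sum_le_sum fun i hi => ?_
  rw [← hidx.sum_incr f (Finset.mem_range.mp hi)]
  exact norm_sum_le _ _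

theorem inscribedSum_le_add_of_refines {P R : IntervalPartition a b} (h : P.points ⊆ R.points)
    {η : ℝ} (hη : ∀ s ∈ Set.Icc a b, ∀ t ∈ Set.Icc a b, dist s t ≤ P.mesh → dist (f s) (f t) ≤ η) :
    inscribedSum f R ≤ inscribedSum f P + 2 * η * (R.n - P.n) := by
  obtain ⟨idx, hidx⟩ := exists_isRefinementMap h
  have hcard : (R.n : ℝ) - P.n
      = ∑ i ∈ Finset.range P.n, (((Finset.Ico (idx i) (idx (i + 1))).card : ℝ) - 1) := by
    simpa using (hidx.sum_blocks fun _ => (1 : ℝ)).symm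
  rw [inscribedSum_eq_sum_range, inscribedSum_eq_sum_range, ← hidx.sum_blocks, hcard,
    Finset.mul_sum, ← Finset.sum_add_distrib]
  refine Finset.sum_le_sum fun i hi => ?_
  have hi := Finset.mem_range.mp hi
  rw [← hidx.sum_incr f hi]
  refine Finset.sum_norm_le_norm_sum_add (Finset.nonempty_Ico.mpr (hidx.lt_succ i hi))
    fun j hj => ?_
  have hsub := hidx.Icc_subset hj
  rw [incr, ← dist_eq_norm]
  exact hη _ (R.pt_mem_Icc _) _ (R.pt_mem_Icc _) (P.dist_le_mesh hi
    (hsub ⟨R.pt_monotone j.le_succ, le_rfl⟩) (hsub ⟨le_rfl, R.pt_monotone j.le_succ⟩))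

theorem inscribedSum_le_length (htop : curveLength f a b ≠ ⊤) (P : IntervalPartition a b) :
    inscribedSum f P ≤ (curveLength f a b).toReal := by
  have h : ENNReal.ofReal (inscribedSum f P) ≤ curveLength f a b :=
    le_iSup (fun P => ENNReal.ofReal (inscribedSum f P)) P
  rwa [← ENNReal.toReal_le_toReal ENNReal.ofReal_ne_top htop,
    ENNReal.toReal_ofReal (inscribedSum_nonneg f P)] at h

theorem exists_length_le_inscribedSum_add (hab : a < b) {ε : ℝ} (hε : 0 < ε) :
    ∃ P : IntervalPartition a b, (curveLength f a b).toReal ≤ inscribedSum f P + ε := by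
  by_contra! h
  have hle : curveLength f a b ≤ ENNReal.ofReal ((curveLength f a b).toReal - ε) :=
    iSup_le fun P => ENNReal.ofReal_le_ofReal (by linarith [h P])
  have h₀ := h (uniform hab 0)
  have h₁ := inscribedSum_nonneg f (uniform hab 0)
  have h₂ := ENNReal.toReal_mono ENNReal.ofReal_ne_top hle
  rw [ENNReal.toReal_ofReal (by linarith)] at h₂
  linarith

theorem exists_length_le_inscribedSum_add_of_mesh_lt (hab : a < b)
    (hcont : ContinuousOn f (Set.Icc a b)) {α : ℝ} (hα : 0 < α) :
    ∃ δ > 0, ∀ P : IntervalPartition a b, P.mesh < δ →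
      (curveLength f a b).toReal ≤ inscribedSum f P + α := by
  obtain ⟨P₀, hP₀⟩ := exists_length_le_inscribedSum_add f hab (half_pos hα)
  set η := α / (4 * (P₀.n + 1))
  obtain ⟨δ, hδ, hf⟩ := Metric.uniformContinuousOn_iff_le.mp
    (isCompact_Icc.uniformContinuousOn_of_continuous hcont) η (by positivity)
  refine ⟨δ, hδ, fun P hP => ?_⟩
  obtain ⟨R, hPR, hP₀R, hRn⟩ := exists_common_refinement P P₀
  have h₁ := inscribedSum_mono f hP₀R
  have h₂ := inscribedSum_le_add_of_refines f hPR fun s hs t ht hst =>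
    hf s hs t ht (hst.trans hP.le)
  have h₃ : 2 * η * (R.n - P.n) ≤ α / 2 := by
    have hRn' : (R.n : ℝ) - P.n ≤ P₀.n + 1 := by
      rw [sub_le_iff_le_add']; exact_mod_cast hRn
    calc 2 * η * (R.n - P.n) ≤ 2 * η * (P₀.n + 1) := by gcongr
      _ = α / 2 := by simp only [η]; field_simp; ring
  linarith

end Curve

structure TaggedPartition (a b : ℝ) extends IntervalPartition a b where
  tag : ℕ → ℝ
  tag_mem : ∀ k < n, tag k ∈ Set.Icc (toIntervalPartition.pt k) (toIntervalPartition.pt (k + 1))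

namespace TaggedPartition

open IntervalPartition

variable {a b : ℝ}

def riemannSum {E : Type*} [Sub E] (T : TaggedPartition a b) (F : E → E → ℝ) (f : ℝ → E) : ℝ :=
  ∑ k ∈ Finset.range T.n, F (f (T.tag k)) (T.incr f k)

def leftEndpoints (P : IntervalPartition a b) : TaggedPartition a b :=
  { P with
    tag := P.pt
    tag_mem := fun k _ => ⟨le_rfl, P.pt_monotone k.le_succ⟩ }

def ofFin (P : IntervalPartition a b) (ξ : Fin P.n → ℝ)
    (hξ : ∀ i, ξ i ∈ Set.Icc (P.x i.castSucc) (P.x i.succ)) : TaggedPartition a b :=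
  { P with
    tag := fun k => if h : k < P.n then ξ ⟨k, h⟩ else a
    tag_mem := fun k hk => by
      simpa only [dif_pos hk, ← P.pt_val, Fin.val_succ, Fin.val_castSucc] using hξ ⟨k, hk⟩ }

theorem riemannSum_ofFin {E : Type*} [Sub E] (F : E → E → ℝ) (f : ℝ → E)
    (P : IntervalPartition a b) (ξ : Fin P.n → ℝ)
    (hξ : ∀ i, ξ i ∈ Set.Icc (P.x i.castSucc) (P.x i.succ)) :
    (ofFin P ξ hξ).riemannSum F f
      = ∑ i : Fin P.n, F (f (ξ i)) (f (P.x i.succ) - f (P.x i.castSucc)) := by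
  change ∑ k ∈ Finset.range P.n, F (f ((ofFin P ξ hξ).tag k)) (P.incr f k) = _
  rw [← Fin.sum_univ_eq_sum_range]
  refine Finset.sum_congr rfl fun i _ => ?_
  simp only [ofFin, incr, dif_pos i.isLt, ← P.pt_val, Fin.val_succ, Fin.val_castSucc]

theorem exists_mesh_lt (hab : a < b) {δ : ℝ} (hδ : 0 < δ) :
    ∃ T : TaggedPartition a b, T.mesh < δ := by
  obtain ⟨P, hP⟩ := IntervalPartition.exists_mesh_lt hab hδ
  exact ⟨leftEndpoints P, hP⟩

theorem tag_mem_Icc (T : TaggedPartition a b) {k : ℕ} (hk : k < T.n) : T.tag k ∈ Set.Icc a b :=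
  Set.Icc_subset_Icc (T.pt_mem_Icc k).1 (T.pt_mem_Icc (k + 1)).2 (T.tag_mem k hk)

variable {M : ℕ} {f : ℝ → EuclideanSpace ℝ (Fin M)}
  {F : EuclideanSpace ℝ (Fin M) → EuclideanSpace ℝ (Fin M) → ℝ}

theorem abs_riemannSum_sub_le_of_refines {T T' : TaggedPartition a b}
    (h : T.points ⊆ T'.points) {ε r D : ℝ}
    (hF : ∀ x ∈ f '' Set.Icc a b, ∀ (s : Finset ℕ) (y t : ℕ → EuclideanSpace ℝ (Fin M)),
      (∀ j ∈ s, y j ∈ f '' Set.Icc a b ∧ ‖y j - x‖ < r) →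
      |∑ j ∈ s, F (y j) (t j) - F x (∑ j ∈ s, t j)|
        ≤ ε * ∑ j ∈ s, ‖t j‖ + D * (∑ j ∈ s, ‖t j‖ - ‖∑ j ∈ s, t j‖))
    (hf : ∀ s ∈ Set.Icc a b, ∀ t ∈ Set.Icc a b, dist s t ≤ T.mesh → dist (f s) (f t) < r) :
    |T'.riemannSum F f - T.riemannSum F f|
      ≤ ε * inscribedSum f T'.toIntervalPartition
        + D * (inscribedSum f T'.toIntervalPartition - inscribedSum f T.toIntervalPartition) := by
  obtain ⟨idx, hidx⟩ := exists_isRefinementMap h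
  have hblock : ∀ i < T.n,
      |∑ j ∈ Finset.Ico (idx i) (idx (i + 1)), F (f (T'.tag j)) (T'.incr f j)
          - F (f (T.tag i)) (T.incr f i)|
        ≤ ε * ∑ j ∈ Finset.Ico (idx i) (idx (i + 1)), ‖T'.incr f j‖
          + D * (∑ j ∈ Finset.Ico (idx i) (idx (i + 1)), ‖T'.incr f j‖ - ‖T.incr f i‖) := by
    intro i hi
    rw [← hidx.sum_incr f hi]
    refine hF _ (Set.mem_image_of_mem f (T.tag_mem_Icc hi)) _ _ _ fun j hj => ?_
    have hj' : j < T'.n := (Finset.mem_Ico.mp hj).2.trans_le (hidx.le _)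
    refine ⟨Set.mem_image_of_mem f (T'.tag_mem_Icc hj'), ?_⟩
    rw [← dist_eq_norm]
    exact hf _ (T'.tag_mem_Icc hj') _ (T.tag_mem_Icc hi)
      (T.dist_le_mesh hi (hidx.Icc_subset hj (T'.tag_mem j hj')) (T.tag_mem i hi))
  rw [riemannSum, riemannSum, inscribedSum_eq_sum_range, inscribedSum_eq_sum_range,
    ← hidx.sum_blocks, ← hidx.sum_blocks, ← Finset.sum_sub_distrib]
  calc _ ≤ _ := Finset.abs_sum_le_sum_abs _ _
    _ ≤ _ := Finset.sum_le_sum fun i hi => hblock i (Finset.mem_range.mp hi)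
    _ = _ := by
      rw [Finset.sum_add_distrib, ← Finset.mul_sum, ← Finset.mul_sum, Finset.sum_sub_distrib]

theorem exists_abs_riemannSum_sub_le_of_refines (hab : a < b) (hcont : ContinuousOn f (Set.Icc a b))
    (htop : curveLength f a b ≠ ⊤) (hF : IsParametricIntegrand F) {ε : ℝ} (hε : 0 < ε) :
    ∃ δ > 0, ∀ T T' : TaggedPartition a b, T.points ⊆ T'.points → T.mesh < δ →
      |T'.riemannSum F f - T.riemannSum F f| ≤ ε := by
  set ℓ := (curveLength f a b).toReal
  have hℓ : 0 ≤ ℓ := ENNReal.toReal_nonneg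
  obtain ⟨r, hr, D, hD, hFD⟩ := exists_abs_sum_sub_le_of_homogeneous hF.1 hF.2
    (isCompact_Icc.image_of_continuousOn hcont) (ε := ε / (2 * (ℓ + 1))) (by positivity) (ι := ℕ)
  obtain ⟨δ₁, hδ₁, hf⟩ := Metric.uniformContinuousOn_iff.mp
    (isCompact_Icc.uniformContinuousOn_of_continuous hcont) r hr
  obtain ⟨δ₂, hδ₂, hlen⟩ := exists_length_le_inscribedSum_add_of_mesh_lt f hab hcont
    (α := ε / (2 * (D + 1))) (by positivity)
  refine ⟨min δ₁ δ₂, lt_min hδ₁ hδ₂, fun T T' h hT => ?_⟩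
  have key := abs_riemannSum_sub_le_of_refines h hFD fun s hs t ht hst =>
    hf s hs t ht (hst.trans_lt (hT.trans_le (min_le_left _ _)))
  have hT' := inscribedSum_le_length f htop T'.toIntervalPartition
  have hTℓ := hlen _ (hT.trans_le (min_le_right _ _))
  have h₁ : ε / (2 * (ℓ + 1)) * inscribedSum f T'.toIntervalPartition ≤ ε / 2 := by
    calc _ ≤ ε / (2 * (ℓ + 1)) * (ℓ + 1) := by gcongr; linarith
      _ = ε / 2 := by field_simp
  have h₂ : D * (inscribedSum f T'.toIntervalPartition - inscribedSum f T.toIntervalPartition)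
      ≤ ε / 2 := by
    calc _ ≤ D * (ε / (2 * (D + 1))) := by gcongr; linarith
      _ ≤ (D + 1) * (ε / (2 * (D + 1))) := by gcongr; linarith
      _ = ε / 2 := by field_simp
  linarith

theorem exists_abs_riemannSum_sub_le (hab : a < b) (hcont : ContinuousOn f (Set.Icc a b))
    (htop : curveLength f a b ≠ ⊤) (hF : IsParametricIntegrand F) {ε : ℝ} (hε : 0 < ε) :
    ∃ δ > 0, ∀ T T' : TaggedPartition a b, T.mesh < δ → T'.mesh < δ →
      |T.riemannSum F f - T'.riemannSum F f| ≤ ε := by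
  obtain ⟨δ, hδ, hT⟩ := exists_abs_riemannSum_sub_le_of_refines hab hcont htop hF (half_pos hε)
  refine ⟨δ, hδ, fun T T' hTδ hT'δ => ?_⟩
  obtain ⟨R, hTR, hT'R, -⟩ := exists_common_refinement T.toIntervalPartition T'.toIntervalPartition
  have h₁ := hT T (leftEndpoints R) hTR hTδ
  have h₂ := hT T' (leftEndpoints R) hT'R hT'δ
  rw [abs_sub_comm] at h₁
  calc |T.riemannSum F f - T'.riemannSum F f|
      ≤ |T.riemannSum F f - (leftEndpoints R).riemannSum F f|
        + |(leftEndpoints R).riemannSum F f - T'.riemannSum F f| := abs_sub_le _ _ _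
    _ ≤ ε := by linarith

end TaggedPartition

/-- For a continuous rectifiable curve `C ↔ f : [a,b] → ℝ^M` and a parametric
integrand `F`, the line integral `∫_C F` exists: the tagged Riemann-type sums
`Σᵢ F(f(ξᵢ), f(xᵢ) − f(xᵢ₋₁))` converge as the mesh tends to `0`. -/
theorem lineIntegral_exists {M : ℕ} (a b : ℝ) (hab : a < b)
    (f : ℝ → EuclideanSpace ℝ (Fin M))
    (hcont : ContinuousOn f (Set.Icc a b)) (hrect : curveLength f a b < ⊤)
    (F : EuclideanSpace ℝ (Fin M) → EuclideanSpace ℝ (Fin M) → ℝ)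
    (hF : IsParametricIntegrand F) :
    ∃ L : ℝ, IsLineIntegral F f a b L := by
  obtain ⟨L, hL⟩ := exists_forall_abs_sub_lt_of_cauchy (fun T : TaggedPartition a b =>
      T.riemannSum F f) (fun T => T.mesh) (fun _ => TaggedPartition.exists_mesh_lt hab)
    (fun _ => TaggedPartition.exists_abs_riemannSum_sub_le hab hcont hrect.ne hF)
  refine ⟨L, fun ε hε => ?_⟩
  obtain ⟨δ, hδ, hLδ⟩ := hL ε hε
  refine ⟨δ, hδ, fun P hP ξ hξ => ?_⟩
  rw [← TaggedPartition.riemannSum_ofFin F f P ξ hξ]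
  exact hLδ _ hP

end
end
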